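/- arXiv:math-ph/0008032 — 8 statements merged into one kernel-verified Lean document; each statement's English description precedes it below -/
import Mathlib

section
/- Let s > 0 and define the gap probability E₂(s) = (∫_{[−s,s]²} e^{−λ₁²}e^{−λ₂²}(λ₂−λ₁)² dλ₁dλ₂) / (∫_{ℝ²} e^{−λ₁²}e^{−λ₂²}(λ₂−λ₁)² dλ₁dλ₂). Then E₂(s) = erf(s)·(erf(s) − 2π^{−1/2} s e^{−s²}). -/
open MeasureTheory Real Set Filter intervalIntegral

noncomputable def erf (s : ℝ) : ℝ :=
  2 / Real.sqrt Real.pi * ∫ t in (0:ℝ)..s, Real.exp (-t ^ 2)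

lemma contg : Continuous fun x : ℝ => Real.exp (-x ^ 2) :=
  (continuous_pow 2).neg.rexp

lemma conth : Continuous fun x : ℝ => x * Real.exp (-x ^ 2) :=
  continuous_id.mul contg

lemma contf : Continuous fun x : ℝ => x ^ 2 * Real.exp (-x ^ 2) :=
  (continuous_pow 2).mul contg

lemma hasDerivAt_I (x : ℝ) :
    HasDerivAt (fun y => ∫ t in (0:ℝ)..y, Real.exp (-t ^ 2)) (Real.exp (-x ^ 2)) x :=
  intervalIntegral.integral_hasDerivAt_right (contg.intervalIntegrable _ _)
    (contg.stronglyMeasurableAtFilter _ _) contg.continuousAt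

lemma I_neg (s : ℝ) :
    (∫ t in (0:ℝ)..(-s), Real.exp (-t ^ 2)) = -∫ t in (0:ℝ)..s, Real.exp (-t ^ 2) := by
  rw [intervalIntegral.integral_symm]
  congr 1
  have := intervalIntegral.integral_comp_neg (a := 0) (b := s) (fun t => Real.exp (-t ^ 2))
  simpa [neg_zero] using this.symm

lemma int_g (s : ℝ) :
    (∫ x in (-s)..s, Real.exp (-x ^ 2)) = 2 * ∫ t in (0:ℝ)..s, Real.exp (-t ^ 2) := by
  have h := intervalIntegral.integral_add_adjacent_intervals (a := -s) (b := 0) (c := s)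
    (μ := volume) (f := fun x => Real.exp (-x ^ 2))
    (contg.intervalIntegrable _ _) (contg.intervalIntegrable _ _)
  have h2 : (∫ x in (-s)..(0:ℝ), Real.exp (-x ^ 2)) = ∫ t in (0:ℝ)..s, Real.exp (-t ^ 2) := by
    rw [intervalIntegral.integral_symm, I_neg]; ring
  linarith [h, h2]

lemma int_h (s : ℝ) : (∫ x in (-s)..s, x * Real.exp (-x ^ 2)) = 0 := by
  have key : ∀ x : ℝ, HasDerivAt (fun y : ℝ => -Real.exp (-y ^ 2) / 2)
      (x * Real.exp (-x ^ 2)) x := by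
    intro x
    have h := ((hasDerivAt_pow 2 x).neg.exp).neg.div_const 2
    refine h.congr_deriv ?_
    simp [mul_comm]; ring
  rw [intervalIntegral.integral_eq_sub_of_hasDerivAt (fun x _ => key x)
    (conth.intervalIntegrable _ _)]
  simp [neg_pow]

lemma int_f (s : ℝ) :
    (∫ x in (-s)..s, x ^ 2 * Real.exp (-x ^ 2)) =
      (∫ t in (0:ℝ)..s, Real.exp (-t ^ 2)) - s * Real.exp (-s ^ 2) := by
  set I : ℝ → ℝ := fun y => ∫ t in (0:ℝ)..y, Real.exp (-t ^ 2) with hI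
  have key : ∀ x : ℝ, HasDerivAt (fun y : ℝ => -(y * Real.exp (-y ^ 2)) / 2 + I y / 2)
      (x ^ 2 * Real.exp (-x ^ 2)) x := by
    intro x
    have h1 : HasDerivAt (fun y : ℝ => y * Real.exp (-y ^ 2))
        (Real.exp (-x ^ 2) + x * (Real.exp (-x ^ 2) * -(2 * x))) x := by
      have := (hasDerivAt_id x).mul ((hasDerivAt_pow 2 x).neg.exp)
      refine this.congr_deriv ?_
      simp [id]
    have h2 := (h1.neg.div_const 2).add ((hasDerivAt_I x).div_const 2)
    refine h2.congr_deriv ?_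
    ring
  rw [intervalIntegral.integral_eq_sub_of_hasDerivAt (fun x _ => key x)
    (contf.intervalIntegrable _ _)]
  have h2 : I (-s) = -I s := I_neg s
  rw [h2]
  ring
  rfl

lemma integrable_g : Integrable fun x : ℝ => Real.exp (-x ^ 2) := by
  simpa using integrable_exp_neg_mul_sq one_pos

lemma integrable_h : Integrable fun x : ℝ => x * Real.exp (-x ^ 2) := by
  simpa using integrable_mul_exp_neg_mul_sq one_pos

lemma integrable_f : Integrable fun x : ℝ => x ^ 2 * Real.exp (-x ^ 2) := by
  have := integrable_rpow_mul_exp_neg_mul_sq one_pos (s := 2) (by norm_num)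
  simpa [Real.rpow_two] using this

lemma tendsto_I :
    Tendsto (fun s => ∫ t in (0:ℝ)..s, Real.exp (-t ^ 2)) atTop
      (nhds (Real.sqrt Real.pi / 2)) := by
  have h := intervalIntegral_tendsto_integral_Ioi (0:ℝ)
    (μ := volume) (f := fun t => Real.exp (-t ^ 2)) integrable_g.integrableOn tendsto_id
  have : (∫ t in Ioi (0:ℝ), Real.exp (-t ^ 2)) = Real.sqrt Real.pi / 2 := by
    have := integral_gaussian_Ioi 1
    simpa using this
  rwa [this] at h

lemma tendsto_tail : Tendsto (fun s : ℝ => s * Real.exp (-s ^ 2)) atTop (nhds 0) := by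
  have hz : Tendsto (fun x : ℝ => Real.exp (-(1 / 2) * x)) atTop (nhds 0) := by
    have := Real.tendsto_exp_neg_atTop_nhds_zero.comp
      (tendsto_id.const_mul_atTop (by norm_num : (0:ℝ) < 1 / 2))
    simpa [Function.comp_def, neg_mul] using this
  have h := (rpow_mul_exp_neg_mul_sq_isLittleO_exp_neg one_pos 1).isBigO.trans_tendsto hz
  simpa [Real.rpow_one] using h

lemma int_g' : (∫ x : ℝ, Real.exp (-x ^ 2)) = Real.sqrt Real.pi := by
  have := integral_gaussian 1
  simpa using this

lemma int_h' : (∫ x : ℝ, x * Real.exp (-x ^ 2)) = 0 := by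
  have h := intervalIntegral_tendsto_integral (μ := volume)
    (f := fun x : ℝ => x * Real.exp (-x ^ 2)) integrable_h
    tendsto_neg_atTop_atBot tendsto_id
  have h0 : Tendsto (fun s : ℝ => ∫ x in (-s)..s, x * Real.exp (-x ^ 2)) atTop (nhds 0) := by
    simpa [int_h] using tendsto_const_nhds (α := ℝ) (f := atTop) (a := (0:ℝ))
  exact tendsto_nhds_unique h h0

lemma int_f' : (∫ x : ℝ, x ^ 2 * Real.exp (-x ^ 2)) = Real.sqrt Real.pi / 2 := by
  have h := intervalIntegral_tendsto_integral (μ := volume)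
    (f := fun x : ℝ => x ^ 2 * Real.exp (-x ^ 2)) integrable_f
    tendsto_neg_atTop_atBot tendsto_id
  have h0 : Tendsto (fun s : ℝ => ∫ x in (-s)..s, x ^ 2 * Real.exp (-x ^ 2)) atTop
      (nhds (Real.sqrt Real.pi / 2)) := by
    have := (tendsto_I.sub tendsto_tail)
    simpa [int_f] using this
  exact (tendsto_nhds_unique h0 h).symm

lemma key (μ : Measure ℝ) [SigmaFinite μ]
    (h0 : Integrable (fun x => Real.exp (-x ^ 2)) μ)
    (h1 : Integrable (fun x => x * Real.exp (-x ^ 2)) μ)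
    (h2 : Integrable (fun x => x ^ 2 * Real.exp (-x ^ 2)) μ) :
    (∫ l : ℝ × ℝ, Real.exp (-l.1 ^ 2) * Real.exp (-l.2 ^ 2) * (l.2 - l.1) ^ 2 ∂μ.prod μ)
      = 2 * ((∫ x, x ^ 2 * Real.exp (-x ^ 2) ∂μ) * (∫ x, Real.exp (-x ^ 2) ∂μ))
        - 2 * (∫ x, x * Real.exp (-x ^ 2) ∂μ) ^ 2 := by
  have hint1 : Integrable (fun l : ℝ × ℝ =>
      (l.1 ^ 2 * Real.exp (-l.1 ^ 2)) * Real.exp (-l.2 ^ 2)) (μ.prod μ) := h2.mul_prod h0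
  have hint2 : Integrable (fun l : ℝ × ℝ =>
      Real.exp (-l.1 ^ 2) * (l.2 ^ 2 * Real.exp (-l.2 ^ 2))) (μ.prod μ) := h0.mul_prod h2
  have hint3 : Integrable (fun l : ℝ × ℝ =>
      (l.1 * Real.exp (-l.1 ^ 2)) * (l.2 * Real.exp (-l.2 ^ 2))) (μ.prod μ) := h1.mul_prod h1
  have heq : (fun l : ℝ × ℝ => Real.exp (-l.1 ^ 2) * Real.exp (-l.2 ^ 2) * (l.2 - l.1) ^ 2)
      = fun l : ℝ × ℝ => ((l.1 ^ 2 * Real.exp (-l.1 ^ 2)) * Real.exp (-l.2 ^ 2)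
        + Real.exp (-l.1 ^ 2) * (l.2 ^ 2 * Real.exp (-l.2 ^ 2)))
        - 2 * ((l.1 * Real.exp (-l.1 ^ 2)) * (l.2 * Real.exp (-l.2 ^ 2))) := by
    funext l; ring
  have e2 := integral_sub (hint1.add hint2) (hint3.const_mul 2)
  simp only [Pi.add_apply] at e2
  have p1 := integral_prod_mul (μ := μ) (ν := μ)
    (f := fun x : ℝ => x ^ 2 * Real.exp (-x ^ 2)) (g := fun x : ℝ => Real.exp (-x ^ 2))
  have p2 := integral_prod_mul (μ := μ) (ν := μ)
    (f := fun x : ℝ => Real.exp (-x ^ 2)) (g := fun x : ℝ => x ^ 2 * Real.exp (-x ^ 2))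
  have p3 := integral_prod_mul (μ := μ) (ν := μ)
    (f := fun x : ℝ => x * Real.exp (-x ^ 2)) (g := fun x : ℝ => x * Real.exp (-x ^ 2))
  rw [heq, e2, integral_add hint1 hint2, MeasureTheory.integral_const_mul, p1, p2, p3]
  ring

/-- The gap probability `E₂(0;(−∞,−s)∪(s,∞);e^{−λ²};N=2)` of the 2×2 GUE equals
`erf(s)·(erf(s) − 2π^{−1/2} s e^{−s²})`. -/
theorem gue_N2_gap_probability (s : ℝ) (hs : 0 < s) :
    (∫ l in Set.Icc (-s) s ×ˢ Set.Icc (-s) s,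
        Real.exp (-l.1 ^ 2) * Real.exp (-l.2 ^ 2) * (l.2 - l.1) ^ 2) /
      (∫ l : ℝ × ℝ, Real.exp (-l.1 ^ 2) * Real.exp (-l.2 ^ 2) * (l.2 - l.1) ^ 2) =
    erf s * (erf s - 2 / Real.sqrt Real.pi * s * Real.exp (-s ^ 2)) := by
  have hss : -s ≤ s := by linarith
  have hπ : (0:ℝ) < Real.sqrt Real.pi := Real.sqrt_pos.2 Real.pi_pos
  have hππ : Real.sqrt Real.pi * Real.sqrt Real.pi = Real.pi :=
    Real.mul_self_sqrt Real.pi_pos.le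
  set E := ∫ t in (0:ℝ)..s, Real.exp (-t ^ 2) with hE
  set μs := (volume : Measure ℝ).restrict (Set.Icc (-s) s) with hμs
  have hIcc : ∀ g : ℝ → ℝ, (∫ x, g x ∂μs) = ∫ x in (-s)..s, g x := by
    intro g
    rw [intervalIntegral.integral_of_le hss, hμs, ← integral_Icc_eq_integral_Ioc]
  have hprod : (volume : Measure (ℝ × ℝ)).restrict (Set.Icc (-s) s ×ˢ Set.Icc (-s) s)
      = μs.prod μs := by
    rw [Measure.volume_eq_prod, Measure.prod_restrict]
  have hnum : (∫ l in Set.Icc (-s) s ×ˢ Set.Icc (-s) s,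
      Real.exp (-l.1 ^ 2) * Real.exp (-l.2 ^ 2) * (l.2 - l.1) ^ 2)
      = 2 * ((E - s * Real.exp (-s ^ 2)) * (2 * E)) - 2 * 0 ^ 2 := by
    rw [hprod, key μs (contg.integrableOn_Icc) (conth.integrableOn_Icc)
      (contf.integrableOn_Icc)]
    rw [hIcc, hIcc, hIcc, int_f, int_g, int_h]
  have hden : (∫ l : ℝ × ℝ, Real.exp (-l.1 ^ 2) * Real.exp (-l.2 ^ 2) * (l.2 - l.1) ^ 2)
      = Real.pi := by
    rw [Measure.volume_eq_prod, key volume integrable_g integrable_h integrable_f,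
      int_f', int_g', int_h']
    linear_combination hππ
  rw [hnum, hden, erf, ← hE]
  field_simp
  ring_nf
  rw [Real.sq_sqrt Real.pi_pos.le]
end

section
/- Let f(s) = −e^{−s²}/(√π · erf(s)) for s > 0. Then f satisfies, for all s > 0, the second-order second-degree differential equation [s f″ + 2 f′ + 8 s f + 24 s² f²]² = 4 (s + 2f)² [(f + s f′)² + 8 s² f² + 16 s³ f³]. -/
/-- The `N = 1` GUE off-diagonal resolvent quantity `R̃(s) = −e^{−s²}/(√π · erf(s))`. -/
noncomputable def f (s : ℝ) : ℝ := -(Real.exp (-s ^ 2) / (Real.sqrt Real.pi * erf s))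

/-!
Since `(√π erf)' = 2 e^{-s²}`, the function `f = -e^{-s²} / (√π erf s)` solves the Riccati
equation `f' = 2 f² - 2 s f` wherever `erf s ≠ 0`. Differentiating once more expresses `f''`
as a polynomial in `s` and `f`, and substituting both into equation (3.15) turns it into a
polynomial identity in `s` and `f s`.
-/

open Real Topology

lemma hasDerivAt_erf (s : ℝ) : HasDerivAt erf (2 / √π * exp (-s ^ 2)) s := by
  have hcont : Continuous fun t : ℝ => exp (-t ^ 2) := by fun_prop
  exact (intervalIntegral.integral_hasDerivAt_right (hcont.intervalIntegrable 0 s)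
    (hcont.stronglyMeasurableAtFilter _ _) hcont.continuousAt).const_mul (2 / √π)

lemma continuous_erf : Continuous erf :=
  continuous_iff_continuousAt.2 fun s => (hasDerivAt_erf s).continuousAt

lemma erf_pos {s : ℝ} (hs : 0 < s) : 0 < erf s := by
  have hint : 0 < ∫ t in (0:ℝ)..s, exp (-t ^ 2) :=
    intervalIntegral.intervalIntegral_pos_of_pos_on
      ((by fun_prop : Continuous fun t : ℝ => exp (-t ^ 2)).intervalIntegrable 0 s)
      (fun t _ => exp_pos _) hs
  have hsqrt : 0 < √π := sqrt_pos.2 pi_pos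
  unfold erf
  positivity

lemma hasDerivAt_f {s : ℝ} (hs : erf s ≠ 0) :
    HasDerivAt f (2 * f s ^ 2 - 2 * s * f s) s := by
  have hsqrt : √π ≠ 0 := (sqrt_pos.2 pi_pos).ne'
  have hnum : HasDerivAt (fun u : ℝ => exp (-u ^ 2)) (exp (-s ^ 2) * (-(2 * s))) s :=
    ((hasDerivAt_pow 2 s).neg.congr_deriv (by ring)).exp
  have hden := (hasDerivAt_erf s).const_mul √π
  refine (hnum.div hden (mul_ne_zero hsqrt hs)).neg.congr_deriv ?_
  simp only [f]
  field_simp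
  ring

lemma deriv_f {s : ℝ} (hs : erf s ≠ 0) : deriv f s = 2 * f s ^ 2 - 2 * s * f s :=
  (hasDerivAt_f hs).deriv

lemma deriv_deriv_f {s : ℝ} (hs : erf s ≠ 0) :
    deriv (deriv f) s = (4 * f s - 2 * s) * (2 * f s ^ 2 - 2 * s * f s) - 2 * f s := by
  have hriccati : deriv f =ᶠ[𝓝 s] fun u => 2 * f u ^ 2 - 2 * u * f u :=
    (continuous_erf.continuousAt.eventually_ne hs).mono fun u hu => deriv_f hu
  have hf := hasDerivAt_f hs
  rw [hriccati.deriv_eq]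
  refine (((hf.pow 2).const_mul 2).sub (((hasDerivAt_id' s).const_mul 2).mul hf)).deriv.trans ?_
  push_cast
  ring

/-- For `N = 1`, `f(s) = −e^{−s²}/(√π erf s)` satisfies the second-order second-degree
equation (3.15):
`[s f″ + 2 f′ + 8 s f + 24 s² f²]² = 4 (s + 2f)² [(f + s f′)² + 8 s² f² + 16 s³ f³]`. -/
theorem gue_N1_Rtilde_ode :
    ∀ s > (0:ℝ),
      (s * deriv (deriv f) s + 2 * deriv f s + 8 * s * f s + 24 * s ^ 2 * (f s) ^ 2) ^ 2 =
        4 * (s + 2 * f s) ^ 2 *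
          ((f s + s * deriv f s) ^ 2 + 8 * s ^ 2 * (f s) ^ 2 + 16 * s ^ 3 * (f s) ^ 3) := by
  intro s hs
  have herf : erf s ≠ 0 := (erf_pos hs).ne'
  rw [deriv_deriv_f herf, deriv_f herf]
  ring
end

section
/- Let N ≥ 1 be an integer, put β₀ = γ₀ = √(2N), and let q, p, u, w : (0,∞) → ℝ be differentiable functions satisfying for all s > 0: q′ = −s q + (β₀ − 2u) p + 2q²p/s, p′ = s p − (γ₀ + 2w) q − 2q p²/s, u′ = −2q², w′ = −2p², together with the first-integral relation β₀γ₀ − 4pq = (β₀ − 2u)(γ₀ + 2w). Define R̃(s) = −q(s)p(s)/s. Then R̃ is twice differentiable and satisfies for all s > 0 the equation [s R̃″ + 2 R̃′ + 8N s R̃ + 24 s² R̃²]² = 4 (s + 2R̃)² [(R̃ + s R̃′)² + 8N s² R̃² + 16 s³ R̃³]. -/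
/-!
Write `S = s R̃ = -q p`, `a = β₀ - 2u` and `b = γ₀ + 2w`. The system gives `S' = b q² - a p²`
(the `1/s` terms cancel) and, as `a' = 4q²` and `b' = -4p²`,
`S'' = 4pq(ab - 2pq) - 2(s + 2R̃)(b q² + a p²)`. Since `s R̃'' + 2R̃' = S''` and `R̃ + s R̃' = S'`,
and the first integral together with `β₀ γ₀ = 2N` says `ab = 2N - 4pq`, equation (3.15) reduces to
`(b q² + a p²)² - (b q² - a p²)² = 4ab p² q²`.
-/

open Filter Topology

theorem HasDerivAt.div_id {S : ℝ → ℝ} {S' t : ℝ} (h : HasDerivAt S S' t) (ht : t ≠ 0) :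
    HasDerivAt (fun x => S x / x) ((S' - S t / t) / t) t := by
  refine (h.div (hasDerivAt_id' t) ht).congr_deriv ?_
  field_simp

theorem hasDerivAt_deriv_div_id {S S' : ℝ → ℝ} {S'' s : ℝ} (hs : s ≠ 0)
    (hS : ∀ᶠ t in 𝓝 s, HasDerivAt S (S' t) t) (hS' : HasDerivAt S' S'' s) :
    HasDerivAt (deriv fun t => S t / t)
      ((S'' - (S' s - S s / s) / s - (S' s - S s / s) / s) / s) s := by
  have hderiv : (deriv fun t => S t / t) =ᶠ[𝓝 s] fun t => (S' t - S t / t) / t := by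
    filter_upwards [hS, eventually_ne_nhds hs] with t hSt ht
    exact (hSt.div_id ht).deriv
  exact ((hS'.sub (hS.self_of_nhds.div_id hs)).div_id hs).congr_of_eventuallyEq hderiv

theorem div_id_deriv_identities {S S' : ℝ → ℝ} {S'' s : ℝ} (hs : s ≠ 0)
    (hS : ∀ᶠ t in 𝓝 s, HasDerivAt S (S' t) t) (hS' : HasDerivAt S' S'' s) :
    DifferentiableAt ℝ (fun t => S t / t) s ∧
      DifferentiableAt ℝ (deriv fun t => S t / t) s ∧
      s * deriv (deriv fun t => S t / t) s + 2 * deriv (fun t => S t / t) s = S'' ∧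
      S s / s + s * deriv (fun t => S t / t) s = S' s := by
  have h₁ := hS.self_of_nhds.div_id hs
  have h₂ := hasDerivAt_deriv_div_id hs hS hS'
  refine ⟨h₁.differentiableAt, h₂.differentiableAt, ?_, ?_⟩
  · rw [h₂.deriv, h₁.deriv]
    field_simp
    ring
  · rw [h₁.deriv]
    field_simp
    ring

section CoupledSystem

variable {β₀ γ₀ : ℝ} {q p u w : ℝ → ℝ} {s : ℝ}

theorem hasDerivAt_neg_mul_of_coupled (hq : DifferentiableAt ℝ q s)
    (hp : DifferentiableAt ℝ p s)
    (hq' : deriv q s = -s * q s + (β₀ - 2 * u s) * p s + 2 * (q s) ^ 2 * p s / s)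
    (hp' : deriv p s = s * p s - (γ₀ + 2 * w s) * q s - 2 * q s * (p s) ^ 2 / s) :
    HasDerivAt (fun t => -(q t * p t))
      ((γ₀ + 2 * w s) * q s ^ 2 - (β₀ - 2 * u s) * p s ^ 2) s := by
  refine (hq.hasDerivAt.mul hp.hasDerivAt).neg.congr_deriv ?_
  rw [hq', hp']
  ring

theorem hasDerivAt_weighted_sq_sub_of_coupled (hq : DifferentiableAt ℝ q s) (hp : DifferentiableAt ℝ p s)
    (hu : DifferentiableAt ℝ u s) (hw : DifferentiableAt ℝ w s)
    (hq' : deriv q s = -s * q s + (β₀ - 2 * u s) * p s + 2 * (q s) ^ 2 * p s / s)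
    (hp' : deriv p s = s * p s - (γ₀ + 2 * w s) * q s - 2 * q s * (p s) ^ 2 / s)
    (hu' : deriv u s = -2 * (q s) ^ 2) (hw' : deriv w s = -2 * (p s) ^ 2) :
    HasDerivAt (fun t => (γ₀ + 2 * w t) * q t ^ 2 - (β₀ - 2 * u t) * p t ^ 2)
      (4 * p s * q s * ((β₀ - 2 * u s) * (γ₀ + 2 * w s) - 2 * p s * q s)
        - 2 * (s - 2 * p s * q s / s) *
          ((γ₀ + 2 * w s) * q s ^ 2 + (β₀ - 2 * u s) * p s ^ 2)) s := by
  have hb := (hw.hasDerivAt.const_mul 2).const_add γ₀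
  have ha := (hu.hasDerivAt.const_mul 2).const_sub β₀
  refine ((hb.mul (hq.hasDerivAt.fun_pow 2)).sub (ha.mul (hp.hasDerivAt.fun_pow 2))).congr_deriv ?_
  rw [hq', hp', hu', hw']
  ring

end CoupledSystem

theorem sq_eq_of_first_integral {n s q p a b : ℝ} (hs : s ≠ 0) (hn : 2 * n = a * b + 4 * p * q) :
    (4 * p * q * (a * b - 2 * p * q) - 2 * (s - 2 * p * q / s) * (b * q ^ 2 + a * p ^ 2)
        + 8 * n * s * (-(q * p) / s) + 24 * s ^ 2 * (-(q * p) / s) ^ 2) ^ 2 =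
      4 * (s + 2 * (-(q * p) / s)) ^ 2 *
        ((b * q ^ 2 - a * p ^ 2) ^ 2 + 8 * n * s ^ 2 * (-(q * p) / s) ^ 2
          + 16 * s ^ 3 * (-(q * p) / s) ^ 3) := by
  have hlinear : 4 * p * q * (a * b - 2 * p * q) - 2 * (s - 2 * p * q / s) * (b * q ^ 2 + a * p ^ 2)
      + 8 * n * s * (-(q * p) / s) + 24 * s ^ 2 * (-(q * p) / s) ^ 2 =
        -2 * (s + 2 * (-(q * p) / s)) * (b * q ^ 2 + a * p ^ 2) := by
    field_simp
    linear_combination (-4 * s * p * q) * hn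
  have hsquare : (b * q ^ 2 + a * p ^ 2) ^ 2 = (b * q ^ 2 - a * p ^ 2) ^ 2
      + 8 * n * s ^ 2 * (-(q * p) / s) ^ 2 + 16 * s ^ 3 * (-(q * p) / s) ^ 3 := by
    field_simp
    linear_combination (-4 * p ^ 2 * q ^ 2) * hn
  rw [hlinear, ← hsquare]
  ring

theorem gue_Rtilde_from_coupled_system_general (N : ℕ)
    (β₀ γ₀ : ℝ) (hβ₀ : β₀ = Real.sqrt (2 * N)) (hγ₀ : γ₀ = Real.sqrt (2 * N))
    (q p u w : ℝ → ℝ)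
    (hq : ∀ s > (0:ℝ), DifferentiableAt ℝ q s)
    (hp : ∀ s > (0:ℝ), DifferentiableAt ℝ p s)
    (hu : ∀ s > (0:ℝ), DifferentiableAt ℝ u s)
    (hw : ∀ s > (0:ℝ), DifferentiableAt ℝ w s)
    (hq' : ∀ s > (0:ℝ), deriv q s =
      -s * q s + (β₀ - 2 * u s) * p s + 2 * (q s) ^ 2 * p s / s)
    (hp' : ∀ s > (0:ℝ), deriv p s =
      s * p s - (γ₀ + 2 * w s) * q s - 2 * q s * (p s) ^ 2 / s)
    (hu' : ∀ s > (0:ℝ), deriv u s = -2 * (q s) ^ 2)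
    (hw' : ∀ s > (0:ℝ), deriv w s = -2 * (p s) ^ 2)
    (hint : ∀ s > (0:ℝ),
      β₀ * γ₀ - 4 * p s * q s = (β₀ - 2 * u s) * (γ₀ + 2 * w s)) :
    ∀ s > (0:ℝ),
      DifferentiableAt ℝ (fun t => -(q t * p t) / t) s ∧
      DifferentiableAt ℝ (deriv (fun t => -(q t * p t) / t)) s ∧
      (s * deriv (deriv (fun t => -(q t * p t) / t)) s
          + 2 * deriv (fun t => -(q t * p t) / t) s
          + 8 * N * s * (-(q s * p s) / s)
          + 24 * s ^ 2 * (-(q s * p s) / s) ^ 2) ^ 2 =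
        4 * (s + 2 * (-(q s * p s) / s)) ^ 2 *
          ((-(q s * p s) / s + s * deriv (fun t => -(q t * p t) / t) s) ^ 2
            + 8 * N * s ^ 2 * (-(q s * p s) / s) ^ 2
            + 16 * s ^ 3 * (-(q s * p s) / s) ^ 3) := by
  intro s hs
  have hS : ∀ᶠ t in 𝓝 s, HasDerivAt (fun t => -(q t * p t))
      ((γ₀ + 2 * w t) * q t ^ 2 - (β₀ - 2 * u t) * p t ^ 2) t := by
    filter_upwards [lt_mem_nhds hs] with t ht
    exact hasDerivAt_neg_mul_of_coupled (hq t ht) (hp t ht) (hq' t ht) (hp' t ht)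
  obtain ⟨hR, hR', hsecond, hfirst⟩ := div_id_deriv_identities hs.ne' hS
    (hasDerivAt_weighted_sq_sub_of_coupled (hq s hs) (hp s hs) (hu s hs) (hw s hs)
      (hq' s hs) (hp' s hs) (hu' s hs) (hw' s hs))
  refine ⟨hR, hR', ?_⟩
  rw [hsecond, hfirst]
  have hN : β₀ * γ₀ = 2 * N := by
    rw [hβ₀, hγ₀]
    exact Real.mul_self_sqrt (by positivity)
  apply sq_eq_of_first_integral hs.ne'
  linarith [hint s hs]

/-- Proposition 3 of the paper (finite-`N` GUE coupled system with
`β₀ = γ₀ = √(2N)`) together with the first integral (3.10) implies that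
`R̃(s) = −q(s)p(s)/s` satisfies the second-order second-degree equation (3.15). -/
theorem gue_Rtilde_from_coupled_system (N : ℕ) (hN : 1 ≤ N)
    (β₀ γ₀ : ℝ) (hβ₀ : β₀ = Real.sqrt (2 * N)) (hγ₀ : γ₀ = Real.sqrt (2 * N))
    (q p u w : ℝ → ℝ)
    (hq : ∀ s > (0:ℝ), DifferentiableAt ℝ q s)
    (hp : ∀ s > (0:ℝ), DifferentiableAt ℝ p s)
    (hu : ∀ s > (0:ℝ), DifferentiableAt ℝ u s)
    (hw : ∀ s > (0:ℝ), DifferentiableAt ℝ w s)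
    (hq' : ∀ s > (0:ℝ), deriv q s =
      -s * q s + (β₀ - 2 * u s) * p s + 2 * (q s) ^ 2 * p s / s)
    (hp' : ∀ s > (0:ℝ), deriv p s =
      s * p s - (γ₀ + 2 * w s) * q s - 2 * q s * (p s) ^ 2 / s)
    (hu' : ∀ s > (0:ℝ), deriv u s = -2 * (q s) ^ 2)
    (hw' : ∀ s > (0:ℝ), deriv w s = -2 * (p s) ^ 2)
    (hint : ∀ s > (0:ℝ),
      β₀ * γ₀ - 4 * p s * q s = (β₀ - 2 * u s) * (γ₀ + 2 * w s)) :
    ∀ s > (0:ℝ),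
      DifferentiableAt ℝ (fun t => -(q t * p t) / t) s ∧
      DifferentiableAt ℝ (deriv (fun t => -(q t * p t) / t)) s ∧
      (s * deriv (deriv (fun t => -(q t * p t) / t)) s
          + 2 * deriv (fun t => -(q t * p t) / t) s
          + 8 * N * s * (-(q s * p s) / s)
          + 24 * s ^ 2 * (-(q s * p s) / s) ^ 2) ^ 2 =
        4 * (s + 2 * (-(q s * p s) / s)) ^ 2 *
          ((-(q s * p s) / s + s * deriv (fun t => -(q t * p t) / t) s) ^ 2
            + 8 * N * s ^ 2 * (-(q s * p s) / s) ^ 2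
            + 16 * s ^ 3 * (-(q s * p s) / s) ^ 3) :=
  gue_Rtilde_from_coupled_system_general N β₀ γ₀ hβ₀ hγ₀ q p u w hq hp hu hw hq' hp' hu' hw' hint
end

section
/- Let N ≥ 1 be an integer, put β₀ = γ₀ = √(2N), and let q, p, u, w : (0,∞) → ℝ be differentiable functions satisfying for all s > 0: q′ = −s q + (β₀ − 2u) p + 2q²p/s, p′ = s p − (γ₀ + 2w) q − 2q p²/s, u′ = −2q², w′ = −2p², together with the first-integral relation β₀γ₀ − 4pq = (β₀ − 2u)(γ₀ + 2w). Define R(s) = q²(γ₀ + 2w) + p²(β₀ − 2u) − 2 s q p + 2 q² p²/s and h(s) = s + 2 q p/s. Then for all s > 0: (i) h² = s² − 2R′, and (ii) (s R″ + 2R′ − 2s(s − h))² = 4 h² [ (R + s R′)² − 4 s² (s − h) R − 2 N s² (s − h)² ]. -/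
/-!
Write `B = β₀ - 2u`, `G = γ₀ + 2w` and `x = qp`. In the system the `q²p²/s` terms cancel in
`x' = Bp² - Gq²`, and the `u', w'` terms cancel in `R'`, leaving
`R' = -2x - 2x²/s² = (s² - h²)/2`, which is (i). Differentiating once more gives
`sR'' + 2R' - 2s(s - h) = -2h x'`, so (ii) says
`x'² = (R + sR')² - 4s²(s - h)R - 2Ns²(s - h)²`; since `s - h = -2x/s`, both sides reduce
to `(Bp² + Gq²)² - 4BGx²` once the first integral `BG = 2N - 4x` is used.
-/

section CoupledSystem

variable {β₀ γ₀ s : ℝ} {q p u w : ℝ → ℝ}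

theorem hasDerivAt_mul_of_coupled_system
    (hq : HasDerivAt q (-s * q s + (β₀ - 2 * u s) * p s + 2 * q s ^ 2 * p s / s) s)
    (hp : HasDerivAt p (s * p s - (γ₀ + 2 * w s) * q s - 2 * q s * p s ^ 2 / s) s) :
    HasDerivAt (fun t => q t * p t)
      ((β₀ - 2 * u s) * p s ^ 2 - (γ₀ + 2 * w s) * q s ^ 2) s :=
  (hq.fun_mul hp).congr_deriv (by ring)

theorem hasDerivAt_resolvent_of_coupled_system (hs : s ≠ 0)
    (hq : HasDerivAt q (-s * q s + (β₀ - 2 * u s) * p s + 2 * q s ^ 2 * p s / s) s)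
    (hp : HasDerivAt p (s * p s - (γ₀ + 2 * w s) * q s - 2 * q s * p s ^ 2 / s) s)
    (hu : HasDerivAt u (-2 * q s ^ 2) s) (hw : HasDerivAt w (-2 * p s ^ 2) s) :
    HasDerivAt (fun t => q t ^ 2 * (γ₀ + 2 * w t) + p t ^ 2 * (β₀ - 2 * u t)
        - 2 * t * q t * p t + 2 * q t ^ 2 * p t ^ 2 / t)
      (-2 * (q s * p s) - 2 * (q s * p s) ^ 2 / s ^ 2) s := by
  have hqw := (hq.fun_pow 2).fun_mul ((hw.const_mul 2).const_add γ₀)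
  have hpu := (hp.fun_pow 2).fun_mul ((hu.const_mul 2).const_sub β₀)
  have hcross := ((hasDerivAt_id' s).const_mul 2).fun_mul hq |>.fun_mul hp
  have hquartic :=
    ((hq.fun_pow 2).const_mul 2).fun_mul (hp.fun_pow 2) |>.fun_div (hasDerivAt_id' s) hs
  exact ((hqw.fun_add hpu).fun_sub hcross).fun_add hquartic |>.congr_deriv (by field_simp; ring)

end CoupledSystem

theorem hasDerivAt_deriv_of_deriv_eq_on_Ioi {f x : ℝ → ℝ} {s D : ℝ} (hs : 0 < s)
    (hf : ∀ t > 0, deriv f t = -2 * x t - 2 * x t ^ 2 / t ^ 2) (hx : HasDerivAt x D s) :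
    HasDerivAt (deriv f) (-2 * D - 4 * x s * D / s ^ 2 + 4 * x s ^ 2 / s ^ 3) s := by
  have hf_nhds : (fun t => -2 * x t - 2 * x t ^ 2 / t ^ 2) =ᶠ[nhds s] deriv f := by
    filter_upwards [Ioi_mem_nhds hs] with t ht
    exact (hf t ht).symm
  refine HasDerivAt.congr_of_eventuallyEq ?_ hf_nhds.symm
  have hquot :=
    ((hx.fun_pow 2).const_mul 2).fun_div ((hasDerivAt_id' s).fun_pow 2) (pow_ne_zero 2 hs.ne')
  exact (hx.const_mul (-2)).fun_sub hquot |>.congr_deriv (by field_simp; ring)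

section Algebra

variable {s x D : ℝ}

theorem second_order_combination_eq (hs : s ≠ 0) :
    s * (-2 * D - 4 * x * D / s ^ 2 + 4 * x ^ 2 / s ^ 3) + 2 * (-2 * x - 2 * x ^ 2 / s ^ 2)
      - 2 * s * (s - (s + 2 * x / s)) = -2 * (s + 2 * x / s) * D := by
  field_simp
  ring

theorem sq_deriv_eq_of_first_integral {Q P B G n : ℝ} (hs : s ≠ 0)
    (hBG : B * G = n - 4 * P * Q) :
    (B * P ^ 2 - G * Q ^ 2) ^ 2 =
      ((Q ^ 2 * G + P ^ 2 * B - 2 * s * Q * P + 2 * Q ^ 2 * P ^ 2 / s)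
          + s * (-2 * (Q * P) - 2 * (Q * P) ^ 2 / s ^ 2)) ^ 2
        - 4 * s ^ 2 * (s - (s + 2 * (Q * P) / s)) *
            (Q ^ 2 * G + P ^ 2 * B - 2 * s * Q * P + 2 * Q ^ 2 * P ^ 2 / s)
        - n * s ^ 2 * (s - (s + 2 * (Q * P) / s)) ^ 2 := by
  field_simp
  linear_combination (-4 * s ^ 2 * (Q * P) ^ 2) * hBG

end Algebra

theorem gue_R_from_coupled_system_general (N : ℕ)
    (β₀ γ₀ : ℝ) (hβ₀ : β₀ = Real.sqrt (2 * N)) (hγ₀ : γ₀ = Real.sqrt (2 * N))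
    (q p u w : ℝ → ℝ)
    (hq : ∀ s > (0:ℝ), DifferentiableAt ℝ q s)
    (hp : ∀ s > (0:ℝ), DifferentiableAt ℝ p s)
    (hu : ∀ s > (0:ℝ), DifferentiableAt ℝ u s)
    (hw : ∀ s > (0:ℝ), DifferentiableAt ℝ w s)
    (hq' : ∀ s > (0:ℝ), deriv q s =
      -s * q s + (β₀ - 2 * u s) * p s + 2 * (q s) ^ 2 * p s / s)
    (hp' : ∀ s > (0:ℝ), deriv p s =
      s * p s - (γ₀ + 2 * w s) * q s - 2 * q s * (p s) ^ 2 / s)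
    (hu' : ∀ s > (0:ℝ), deriv u s = -2 * (q s) ^ 2)
    (hw' : ∀ s > (0:ℝ), deriv w s = -2 * (p s) ^ 2)
    (hint : ∀ s > (0:ℝ),
      β₀ * γ₀ - 4 * p s * q s = (β₀ - 2 * u s) * (γ₀ + 2 * w s)) :
    ∀ s > (0:ℝ),
      (s + 2 * q s * p s / s) ^ 2 =
        s ^ 2 - 2 * deriv (fun t => (q t) ^ 2 * (γ₀ + 2 * w t) + (p t) ^ 2 * (β₀ - 2 * u t)
          - 2 * t * q t * p t + 2 * (q t) ^ 2 * (p t) ^ 2 / t) s ∧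
      (s * deriv (deriv (fun t => (q t) ^ 2 * (γ₀ + 2 * w t) + (p t) ^ 2 * (β₀ - 2 * u t)
            - 2 * t * q t * p t + 2 * (q t) ^ 2 * (p t) ^ 2 / t)) s
          + 2 * deriv (fun t => (q t) ^ 2 * (γ₀ + 2 * w t) + (p t) ^ 2 * (β₀ - 2 * u t)
            - 2 * t * q t * p t + 2 * (q t) ^ 2 * (p t) ^ 2 / t) s
          - 2 * s * (s - (s + 2 * q s * p s / s))) ^ 2 =
        4 * (s + 2 * q s * p s / s) ^ 2 *
          ((((q s) ^ 2 * (γ₀ + 2 * w s) + (p s) ^ 2 * (β₀ - 2 * u s)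
              - 2 * s * q s * p s + 2 * (q s) ^ 2 * (p s) ^ 2 / s)
            + s * deriv (fun t => (q t) ^ 2 * (γ₀ + 2 * w t) + (p t) ^ 2 * (β₀ - 2 * u t)
              - 2 * t * q t * p t + 2 * (q t) ^ 2 * (p t) ^ 2 / t) s) ^ 2
            - 4 * s ^ 2 * (s - (s + 2 * q s * p s / s)) *
              ((q s) ^ 2 * (γ₀ + 2 * w s) + (p s) ^ 2 * (β₀ - 2 * u s)
                - 2 * s * q s * p s + 2 * (q s) ^ 2 * (p s) ^ 2 / s)
            - 2 * N * s ^ 2 * (s - (s + 2 * q s * p s / s)) ^ 2) := by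
  have hqD t (ht : 0 < t) := hq' t ht ▸ (hq t ht).hasDerivAt
  have hpD t (ht : 0 < t) := hp' t ht ▸ (hp t ht).hasDerivAt
  have hR' t (ht : 0 < t) := (hasDerivAt_resolvent_of_coupled_system ht.ne' (hqD t ht) (hpD t ht)
    (hu' t ht ▸ (hu t ht).hasDerivAt) (hw' t ht ▸ (hw t ht).hasDerivAt)).deriv
  intro s hs
  have hR'' := (hasDerivAt_deriv_of_deriv_eq_on_Ioi hs hR'
    (hasDerivAt_mul_of_coupled_system (hqD s hs) (hpD s hs))).deriv
  have hBG : (β₀ - 2 * u s) * (γ₀ + 2 * w s) = 2 * N - 4 * p s * q s := by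
    rw [← hint s hs, hβ₀, hγ₀, Real.mul_self_sqrt (by positivity)]
  simp only [mul_assoc 2 (q s) (p s), hR' s hs, hR'']
  refine ⟨by field_simp; ring, ?_⟩
  rw [second_order_combination_eq hs.ne', ← sq_deriv_eq_of_first_integral hs.ne' hBG]
  ring

/-- Proposition 3 of the paper (finite-`N` GUE coupled system with
`β₀ = γ₀ = √(2N)`) together with the first integral (3.10) implies that
`R(s) = q²(γ₀+2w) + p²(β₀−2u) − 2sqp + 2q²p²/s` and `h(s) = s + 2qp/s` satisfy
(i) `h² = s² − 2R′` (equation (3.19)) and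
(ii) the squared form of the second-order equation (3.16). -/
theorem gue_R_from_coupled_system (N : ℕ) (hN : 1 ≤ N)
    (β₀ γ₀ : ℝ) (hβ₀ : β₀ = Real.sqrt (2 * N)) (hγ₀ : γ₀ = Real.sqrt (2 * N))
    (q p u w : ℝ → ℝ)
    (hq : ∀ s > (0:ℝ), DifferentiableAt ℝ q s)
    (hp : ∀ s > (0:ℝ), DifferentiableAt ℝ p s)
    (hu : ∀ s > (0:ℝ), DifferentiableAt ℝ u s)
    (hw : ∀ s > (0:ℝ), DifferentiableAt ℝ w s)
    (hq' : ∀ s > (0:ℝ), deriv q s =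
      -s * q s + (β₀ - 2 * u s) * p s + 2 * (q s) ^ 2 * p s / s)
    (hp' : ∀ s > (0:ℝ), deriv p s =
      s * p s - (γ₀ + 2 * w s) * q s - 2 * q s * (p s) ^ 2 / s)
    (hu' : ∀ s > (0:ℝ), deriv u s = -2 * (q s) ^ 2)
    (hw' : ∀ s > (0:ℝ), deriv w s = -2 * (p s) ^ 2)
    (hint : ∀ s > (0:ℝ),
      β₀ * γ₀ - 4 * p s * q s = (β₀ - 2 * u s) * (γ₀ + 2 * w s)) :
    ∀ s > (0:ℝ),
      (s + 2 * q s * p s / s) ^ 2 =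
        s ^ 2 - 2 * deriv (fun t => (q t) ^ 2 * (γ₀ + 2 * w t) + (p t) ^ 2 * (β₀ - 2 * u t)
          - 2 * t * q t * p t + 2 * (q t) ^ 2 * (p t) ^ 2 / t) s ∧
      (s * deriv (deriv (fun t => (q t) ^ 2 * (γ₀ + 2 * w t) + (p t) ^ 2 * (β₀ - 2 * u t)
            - 2 * t * q t * p t + 2 * (q t) ^ 2 * (p t) ^ 2 / t)) s
          + 2 * deriv (fun t => (q t) ^ 2 * (γ₀ + 2 * w t) + (p t) ^ 2 * (β₀ - 2 * u t)
            - 2 * t * q t * p t + 2 * (q t) ^ 2 * (p t) ^ 2 / t) s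
          - 2 * s * (s - (s + 2 * q s * p s / s))) ^ 2 =
        4 * (s + 2 * q s * p s / s) ^ 2 *
          ((((q s) ^ 2 * (γ₀ + 2 * w s) + (p s) ^ 2 * (β₀ - 2 * u s)
              - 2 * s * q s * p s + 2 * (q s) ^ 2 * (p s) ^ 2 / s)
            + s * deriv (fun t => (q t) ^ 2 * (γ₀ + 2 * w t) + (p t) ^ 2 * (β₀ - 2 * u t)
              - 2 * t * q t * p t + 2 * (q t) ^ 2 * (p t) ^ 2 / t) s) ^ 2
            - 4 * s ^ 2 * (s - (s + 2 * q s * p s / s)) *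
              ((q s) ^ 2 * (γ₀ + 2 * w s) + (p s) ^ 2 * (β₀ - 2 * u s)
                - 2 * s * q s * p s + 2 * (q s) ^ 2 * (p s) ^ 2 / s)
            - 2 * N * s ^ 2 * (s - (s + 2 * q s * p s / s)) ^ 2) :=
  gue_R_from_coupled_system_general N β₀ γ₀ hβ₀ hγ₀ q p u w hq hp hu hw hq' hp' hu' hw' hint
end

section
/- Let q : ℝ → ℝ be twice differentiable and satisfy the Painlevé-II equation q″(t) = 2q(t)³ + t·q(t) for all t. Then the function r̃(t) = −q(t)²/2 satisfies 2 r̃ r̃″ − (r̃′)² + 16 r̃³ − 4 t r̃² = 0 for all t. -/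
/-! For `r = -q²/2` one has `r' = -q q'` and `r'' = -(q'² + q q'')`, so the `q'²` terms cancel in
`2 r r'' - r'² = q³ q''`. The remaining terms `16 r³ - 4 t r² = -q³ (2 q³ + t q)` then make the
left-hand side equal to `q³ (q'' - 2 q³ - t q)`, which vanishes by Painlevé II. -/

section

variable {q : ℝ → ℝ}

theorem deriv_neg_sq_div_two (hq : Differentiable ℝ q) :
    deriv (fun x => -(q x) ^ 2 / 2) = fun x => -(q x * deriv q x) := by
  funext x
  refine (((hq x).hasDerivAt.pow 2).neg.div_const 2).deriv.trans ?_
  ring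

theorem deriv_deriv_neg_sq_div_two (hq : Differentiable ℝ q) {t : ℝ}
    (hq' : DifferentiableAt ℝ (deriv q) t) :
    deriv (deriv (fun x => -(q x) ^ 2 / 2)) t = -(deriv q t ^ 2 + q t * deriv (deriv q) t) := by
  rw [deriv_neg_sq_div_two hq]
  refine ((hq t).hasDerivAt.mul hq'.hasDerivAt).neg.deriv.trans ?_
  ring

theorem two_mul_deriv_deriv_sub_deriv_sq_neg_sq_div_two (hq : Differentiable ℝ q) {t : ℝ}
    (hq' : DifferentiableAt ℝ (deriv q) t) :
    2 * (-(q t) ^ 2 / 2) * deriv (deriv (fun x => -(q x) ^ 2 / 2)) t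
      - (deriv (fun x => -(q x) ^ 2 / 2) t) ^ 2 = q t ^ 3 * deriv (deriv q) t := by
  rw [deriv_deriv_neg_sq_div_two hq hq', deriv_neg_sq_div_two hq]
  ring

end

/-- If `q` satisfies the Painlevé-II equation `q″ = 2q³ + tq` (with `α = 0`), then
`r̃ = −q²/2` satisfies equation (3.34): `2r̃r̃″ − (r̃′)² + 16r̃³ − 4tr̃² = 0`. -/
theorem painleveII_to_softedge_ode (q : ℝ → ℝ)
    (hq : Differentiable ℝ q) (hq' : Differentiable ℝ (deriv q))
    (hode : ∀ t : ℝ, deriv (deriv q) t = 2 * (q t) ^ 3 + t * q t) :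
    ∀ t : ℝ,
      2 * (-(q t) ^ 2 / 2) * deriv (deriv (fun x => -(q x) ^ 2 / 2)) t
        - (deriv (fun x => -(q x) ^ 2 / 2) t) ^ 2
        + 16 * (-(q t) ^ 2 / 2) ^ 3
        - 4 * t * (-(q t) ^ 2 / 2) ^ 2 = 0 := by
  intro t
  linear_combination two_mul_deriv_deriv_sub_deriv_sq_neg_sq_div_two hq (hq' t)
    + q t ^ 3 * hode t
end

section
/- Let α, β > −1 and 0 < s < 1, and define E₂(s) = (∫_{[−s,s]²} (1−λ₁)^α(1+λ₁)^β (1−λ₂)^α(1+λ₂)^β (λ₂−λ₁)² dλ₁dλ₂) / (∫_{[−1,1]²} (1−λ₁)^α(1+λ₁)^β (1−λ₂)^α(1+λ₂)^β (λ₂−λ₁)² dλ₁dλ₂). Then E₂(s) = (α+β+3)·[I_{(1+s)/2}(α+1,β+2) − I_{(1−s)/2}(α+1,β+2)]·[I_{(1+s)/2}(α+2,β+1) − I_{(1−s)/2}(α+2,β+1)] − (α+β+2)·[I_{(1+s)/2}(α+2,β+2) − I_{(1−s)/2}(α+2,β+2)]·[I_{(1+s)/2}(α+1,β+1) − I_{(1−s)/2}(α+1,β+1)].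 -/
open MeasureTheory intervalIntegral Set

/-- The regularized incomplete beta function
`I_x(a,b) = (∫_0^x t^{a−1}(1−t)^{b−1} dt) / (∫_0^1 t^{a−1}(1−t)^{b−1} dt)`. -/
noncomputable def regIncBeta (x a b : ℝ) : ℝ :=
  (∫ t in (0:ℝ)..x, t ^ (a - 1) * (1 - t) ^ (b - 1)) /
    (∫ t in (0:ℝ)..(1:ℝ), t ^ (a - 1) * (1 - t) ^ (b - 1))

namespace JUE

noncomputable def bfun (a b t : ℝ) : ℝ := t ^ (a - 1) * (1 - t) ^ (b - 1)

lemma bfun_intable {a b : ℝ} (ha : 0 < a) (hb : 0 < b) :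
    IntervalIntegrable (bfun a b) volume 0 1 := by
  have h1 : IntervalIntegrable (bfun a b) volume 0 (1/2) := by
    have hi : IntervalIntegrable (fun t : ℝ => t ^ (a - 1)) volume 0 (1/2) :=
      intervalIntegrable_rpow' (by linarith)
    have hc : ContinuousOn (fun t : ℝ => (1 - t) ^ (b - 1)) (Set.uIcc 0 (1/2)) := by
      apply ContinuousOn.rpow_const (by fun_prop)
      intro x hx
      rw [Set.uIcc_of_le (by norm_num)] at hx
      left
      have := hx.2
      intro h; nlinarith
    exact hi.mul_continuousOn hc
  have h2 : IntervalIntegrable (bfun a b) volume (1/2) 1 := by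
    have hi : IntervalIntegrable (fun t : ℝ => (1 - t) ^ (b - 1)) volume (1/2) 1 := by
      have h0 : IntervalIntegrable (fun t : ℝ => t ^ (b - 1)) volume 0 (1/2) :=
        intervalIntegrable_rpow' (by linarith)
      have := (h0.comp_sub_left 1).symm
      norm_num at this
      exact this
    have hc : ContinuousOn (fun t : ℝ => t ^ (a - 1)) (Set.uIcc (1/2) 1) := by
      apply ContinuousOn.rpow_const (by fun_prop)
      intro x hx
      rw [Set.uIcc_of_le (by norm_num)] at hx
      left
      intro h; rw [h] at hx; norm_num at hx
    exact hi.continuousOn_mul hc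
  exact h1.trans h2

lemma bfun_pos_int {a b : ℝ} (ha : 0 < a) (hb : 0 < b) :
    0 < ∫ t in (0:ℝ)..1, bfun a b t := by
  apply intervalIntegral_pos_of_pos_on (bfun_intable ha hb) _ one_pos
  intro x hx
  exact mul_pos (Real.rpow_pos_of_pos hx.1 _) (Real.rpow_pos_of_pos (by linarith [hx.2]) _)

lemma rpow_factor {t c : ℝ} (ht : 0 ≤ t) (hc : c ≠ 0) : t ^ c = t ^ (c - 1) * t := by
  rcases eq_or_lt_of_le ht with h | h
  · rw [← h, Real.zero_rpow hc]; ring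
  · rw [← Real.rpow_add_one h.ne' (c - 1)]; ring_nf

lemma bfun_split {a b t : ℝ} (ha : 0 < a) (hb : 0 < b) (ht0 : 0 ≤ t) (ht1 : t ≤ 1) :
    bfun a b t = bfun (a+1) b t + bfun a (b+1) t := by
  unfold bfun
  have h1 : t ^ (a + 1 - 1) = t ^ (a - 1) * t := by
    rw [show a + 1 - 1 = a by ring]; exact rpow_factor ht0 ha.ne'
  have h2 : (1 - t) ^ (b + 1 - 1) = (1 - t) ^ (b - 1) * (1 - t) := by
    rw [show b + 1 - 1 = b by ring]; exact rpow_factor (by linarith) hb.ne'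
  rw [h1, h2]; ring

lemma bfun_lin1 {a b t : ℝ} (ha : 0 < a) (hb : 0 < b) (ht0 : 0 ≤ t) (ht1 : t ≤ 1) :
    bfun a b t * (1 - 2*t) = bfun a (b+1) t - bfun (a+1) b t := by
  unfold bfun
  have h1 : t ^ (a + 1 - 1) = t ^ (a - 1) * t := by
    rw [show a + 1 - 1 = a by ring]; exact rpow_factor ht0 ha.ne'
  have h2 : (1 - t) ^ (b + 1 - 1) = (1 - t) ^ (b - 1) * (1 - t) := by
    rw [show b + 1 - 1 = b by ring]; exact rpow_factor (by linarith) hb.ne'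
  rw [h1, h2]; ring

lemma bfun_lin2 {a b t : ℝ} (ha : 0 < a) (hb : 0 < b) (ht0 : 0 ≤ t) (ht1 : t ≤ 1) :
    bfun a b t * (1 - 2*t)^2 = bfun a b t - 4 * bfun (a+1) (b+1) t := by
  unfold bfun
  have h1 : t ^ (a + 1 - 1) = t ^ (a - 1) * t := by
    rw [show a + 1 - 1 = a by ring]; exact rpow_factor ht0 ha.ne'
  have h2 : (1 - t) ^ (b + 1 - 1) = (1 - t) ^ (b - 1) * (1 - t) := by
    rw [show b + 1 - 1 = b by ring]; exact rpow_factor (by linarith) hb.ne'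
  rw [h1, h2]; ring

lemma bfun_eq_complex {a b : ℝ} (ha : 0 < a) (hb : 0 < b) :
    ((∫ t in (0:ℝ)..1, bfun a b t : ℝ) : ℂ) = Complex.betaIntegral a b := by
  rw [← intervalIntegral.integral_ofReal, Complex.betaIntegral]
  refine intervalIntegral.integral_congr fun t ht => ?_
  rw [Set.uIcc_of_le zero_le_one] at ht
  unfold bfun
  push_cast
  rw [Complex.ofReal_cpow ht.1 (a-1), Complex.ofReal_cpow (by linarith [ht.2] : (0:ℝ) ≤ 1 - t) (b-1)]
  push_cast
  ring

lemma beta_rec {a b : ℝ} (ha : 0 < a) (hb : 0 < b) :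
    a * ∫ t in (0:ℝ)..1, bfun a (b+1) t = b * ∫ t in (0:ℝ)..1, bfun (a+1) b t := by
  have h := Complex.betaIntegral_recurrence (u := (a:ℂ)) (v := (b:ℂ)) (by simpa) (by simpa)
  have e1 := bfun_eq_complex ha (by linarith : (0:ℝ) < b + 1)
  have e2 := bfun_eq_complex (by linarith : (0:ℝ) < a + 1) hb
  push_cast at e1 e2
  rw [← e1, ← e2] at h
  exact_mod_cast h

/-- key relation: (a+b+1) B(a+1,b+1) B(a,b) = (a+b) B(a,b+1) B(a+1,b) -/
lemma beta_key {a b : ℝ} (ha : 0 < a) (hb : 0 < b) :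
    (a + b + 1) * ((∫ t in (0:ℝ)..1, bfun (a+1) (b+1) t) * ∫ t in (0:ℝ)..1, bfun a b t)
      = (a + b) * ((∫ t in (0:ℝ)..1, bfun a (b+1) t) * ∫ t in (0:ℝ)..1, bfun (a+1) b t) := by
  set B1 := ∫ t in (0:ℝ)..1, bfun a b t with hB1
  set B2 := ∫ t in (0:ℝ)..1, bfun a (b+1) t with hB2
  set B3 := ∫ t in (0:ℝ)..1, bfun (a+1) b t with hB3
  set B4 := ∫ t in (0:ℝ)..1, bfun (a+1) (b+1) t with hB4
  set B5 := ∫ t in (0:ℝ)..1, bfun (a+2) b t with hB5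
  have r2 : B1 = B3 + B2 := by
    rw [hB1, hB2, hB3, ← intervalIntegral.integral_add (bfun_intable (by linarith) hb)
      (bfun_intable ha (by linarith))]
    exact intervalIntegral.integral_congr fun t ht => by
      rw [Set.uIcc_of_le zero_le_one] at ht
      exact bfun_split ha hb ht.1 ht.2
  have r3 : a * B2 = b * B3 := beta_rec ha hb
  have r4 : B3 = B5 + B4 := by
    rw [hB3, hB4, hB5, show a + 2 = a + 1 + 1 by ring, ← intervalIntegral.integral_add
      (bfun_intable (by linarith) hb) (bfun_intable (by linarith) (by linarith))]
    exact intervalIntegral.integral_congr fun t ht => by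
      rw [Set.uIcc_of_le zero_le_one] at ht
      exact bfun_split (by linarith) hb ht.1 ht.2
  have r5 : (a+1) * B4 = b * B5 := by
    have := beta_rec (a := a+1) (b := b) (by linarith) hb
    rw [show a + 1 + 1 = a + 2 by ring] at this
    exact this
  have e1 : (a + b + 1) * B4 = b * B3 := by linear_combination (-b) * r4 + r5
  have e2 : a * B1 = (a + b) * B3 := by linear_combination a * r2 + r3
  have key : a * ((a + b + 1) * (B4 * B1)) = a * ((a + b) * (B2 * B3)) := by
    linear_combination (a * B1) * e1 + (b * B3) * e2 - ((a+b) * B3) * r3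
  have := mul_left_cancel₀ ha.ne' key
  linear_combination this

lemma comp_affine (F : ℝ → ℝ) (p q : ℝ) :
    ∫ x in (1 - 2*q)..(1 - 2*p), F x = 2 * ∫ t in p..q, F (1 - 2*t) := by
  have h1 : ∫ t in p..q, F (1 - 2*t)
      = (2:ℝ)⁻¹ • ∫ u in (2*p)..(2*q), F (1 - u) :=
    intervalIntegral.integral_comp_mul_left (fun u => F (1 - u)) two_ne_zero
  have h2 : ∫ u in (2*p)..(2*q), F (1 - u) = ∫ x in (1 - 2*q)..(1 - 2*p), F x :=
    intervalIntegral.integral_comp_sub_left F 1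
  rw [h1, h2, smul_eq_mul]; ring

/-- substitution core: weight integral over (-r, r) in terms of bfun integrals -/
lemma subst_core {α β : ℝ} (hα : -1 < α) (hβ : -1 < β) (G : ℝ → ℝ) {r : ℝ}
    (hr0 : 0 < r) (hr1 : r ≤ 1) :
    ∫ x in (-r)..r, (1 - x) ^ α * (1 + x) ^ β * G x
      = 2 ^ (α + β + 1) *
        ∫ t in ((1-r)/2)..((1+r)/2), bfun (α+1) (β+1) t * G (1 - 2*t) := by
  have hend1 : -r = 1 - 2 * ((1+r)/2) := by ring
  have hend2 : r = 1 - 2 * ((1-r)/2) := by ring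
  have key := comp_affine (fun x => (1 - x) ^ α * (1 + x) ^ β * G x) ((1-r)/2) ((1+r)/2)
  rw [← hend1, ← hend2] at key
  rw [key]
  have hcong : ∫ t in ((1-r)/2)..((1+r)/2),
        (1 - (1 - 2*t)) ^ α * (1 + (1 - 2*t)) ^ β * G (1 - 2*t)
      = ∫ t in ((1-r)/2)..((1+r)/2), 2 ^ (α+β) * (bfun (α+1) (β+1) t * G (1 - 2*t)) := by
    refine intervalIntegral.integral_congr fun t ht => ?_
    rw [Set.uIcc_of_le (by linarith)] at ht
    have ht0 : 0 ≤ t := by linarith [ht.1]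
    have ht1 : t ≤ 1 := by linarith [ht.2]
    have e1 : 1 - (1 - 2*t) = 2 * t := by ring
    have e2 : 1 + (1 - 2*t) = 2 * (1 - t) := by ring
    rw [e1, e2, Real.mul_rpow (by norm_num) ht0, Real.mul_rpow (by norm_num) (by linarith)]
    unfold bfun
    rw [show α + 1 - 1 = α by ring, show β + 1 - 1 = β by ring,
      Real.rpow_add (by norm_num : (0:ℝ) < 2) α β]
    ring
  rw [hcong, intervalIntegral.integral_const_mul,
    show (2:ℝ) ^ (α+β+1) = 2 * 2 ^ (α+β) by
      rw [Real.rpow_add_one (by norm_num : (2:ℝ) ≠ 0) (α+β)]; ring]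
  ring

lemma bfun_int_sub {a b p q : ℝ} (ha : 0 < a) (hb : 0 < b) (hp : 0 ≤ p) (hq : q ≤ 1)
    (hpq : p ≤ q) : IntervalIntegrable (bfun a b) volume p q := by
  apply (bfun_intable ha hb).mono_set
  rw [Set.uIcc_of_le hpq, Set.uIcc_of_le zero_le_one]
  exact Set.Icc_subset_Icc hp hq

lemma M0_eq {α β : ℝ} (hα : -1 < α) (hβ : -1 < β) {r : ℝ} (hr0 : 0 < r) (hr1 : r ≤ 1) :
    ∫ x in (-r)..r, (1 - x) ^ α * (1 + x) ^ β
      = 2 ^ (α + β + 1) * ∫ t in ((1-r)/2)..((1+r)/2), bfun (α+1) (β+1) t := by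
  simpa using subst_core hα hβ (fun _ => 1) hr0 hr1

lemma M1_eq {α β : ℝ} (hα : -1 < α) (hβ : -1 < β) {r : ℝ} (hr0 : 0 < r) (hr1 : r ≤ 1) :
    ∫ x in (-r)..r, (1 - x) ^ α * (1 + x) ^ β * x
      = 2 ^ (α + β + 1) * ((∫ t in ((1-r)/2)..((1+r)/2), bfun (α+1) (β+2) t)
          - ∫ t in ((1-r)/2)..((1+r)/2), bfun (α+2) (β+1) t) := by
  rw [subst_core hα hβ (fun x => x) hr0 hr1]
  congr 1
  have hp : (0:ℝ) ≤ (1-r)/2 := by linarith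
  have hq : (1+r)/2 ≤ 1 := by linarith
  have hpq : (1-r)/2 ≤ (1+r)/2 := by linarith
  rw [← intervalIntegral.integral_sub
    (bfun_int_sub (by linarith) (by linarith) hp hq hpq)
    (bfun_int_sub (by linarith) (by linarith) hp hq hpq)]
  refine intervalIntegral.integral_congr fun t ht => ?_
  rw [Set.uIcc_of_le hpq] at ht
  have := bfun_lin1 (a := α+1) (b := β+1) (t := t) (by linarith) (by linarith)
    (by linarith [ht.1]) (by linarith [ht.2])
  rw [show α+1+1 = α+2 by ring, show β+1+1 = β+2 by ring] at this
  exact this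

lemma M2_eq {α β : ℝ} (hα : -1 < α) (hβ : -1 < β) {r : ℝ} (hr0 : 0 < r) (hr1 : r ≤ 1) :
    ∫ x in (-r)..r, (1 - x) ^ α * (1 + x) ^ β * x ^ 2
      = 2 ^ (α + β + 1) * ((∫ t in ((1-r)/2)..((1+r)/2), bfun (α+1) (β+1) t)
          - 4 * ∫ t in ((1-r)/2)..((1+r)/2), bfun (α+2) (β+2) t) := by
  rw [subst_core hα hβ (fun x => x ^ 2) hr0 hr1]
  congr 1
  have hp : (0:ℝ) ≤ (1-r)/2 := by linarith
  have hq : (1+r)/2 ≤ 1 := by linarith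
  have hpq : (1-r)/2 ≤ (1+r)/2 := by linarith
  rw [← intervalIntegral.integral_const_mul,
    ← intervalIntegral.integral_sub
    (bfun_int_sub (by linarith) (by linarith) hp hq hpq)
    ((bfun_int_sub (a := α+2) (b := β+2) (by linarith) (by linarith) hp hq hpq).const_mul 4)]
  refine intervalIntegral.integral_congr fun t ht => ?_
  rw [Set.uIcc_of_le hpq] at ht
  have := bfun_lin2 (a := α+1) (b := β+1) (t := t) (by linarith) (by linarith)
    (by linarith [ht.1]) (by linarith [ht.2])
  rw [show α+1+1 = α+2 by ring, show β+1+1 = β+2 by ring] at this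
  exact this

lemma fubini_eq (w : ℝ → ℝ) {r : ℝ}
    (h0 : IntegrableOn w (Set.Icc (-r) r))
    (h1 : IntegrableOn (fun x => w x * x) (Set.Icc (-r) r))
    (h2 : IntegrableOn (fun x => w x * x ^ 2) (Set.Icc (-r) r)) :
    (∫ l in Set.Icc (-r) r ×ˢ Set.Icc (-r) r, w l.1 * w l.2 * (l.2 - l.1) ^ 2)
      = 2 * ((∫ x in Set.Icc (-r) r, w x) * (∫ x in Set.Icc (-r) r, w x * x ^ 2)
          - (∫ x in Set.Icc (-r) r, w x * x) ^ 2) := by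
  set S := Set.Icc (-r) r with hS
  have hfun : (fun l : ℝ × ℝ => w l.1 * w l.2 * (l.2 - l.1) ^ 2)
      = fun l : ℝ × ℝ => w l.1 * (w l.2 * l.2 ^ 2)
          + ((-2) * ((w l.1 * l.1) * (w l.2 * l.2)) + (w l.1 * l.1 ^ 2) * w l.2) := by
    funext l; ring
  have hF : IntegrableOn (fun l : ℝ × ℝ => w l.1 * w l.2 * (l.2 - l.1) ^ 2) (S ×ˢ S)
      (volume.prod volume) := by
    rw [hfun]
    unfold IntegrableOn
    rw [← Measure.prod_restrict S S]
    exact ((h0.mul_prod h2).add (((h1.mul_prod h1).const_mul (-2)).add (h2.mul_prod h0)))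
  have hvol : (volume : Measure (ℝ × ℝ)) = volume.prod volume := Measure.volume_eq_prod ℝ ℝ
  rw [hvol, setIntegral_prod _ hF]
  have inner : ∀ x : ℝ, (∫ y in S, w x * w y * (y - x) ^ 2)
      = w x * ((∫ y in S, w y * y ^ 2) - 2 * x * (∫ y in S, w y * y)
          + x ^ 2 * (∫ y in S, w y)) := by
    intro x
    have e : (fun y => w x * w y * (y - x) ^ 2)
        = fun y => w x * ((w y * y ^ 2) - (2 * x) * (w y * y) + (x ^ 2) * w y) := by
      funext y; ring
    have hB : IntegrableOn (fun y => (2 * x) * (w y * y)) S := h1.const_mul (2*x)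
    have hC : IntegrableOn (fun y => (x ^ 2) * w y) S := h0.const_mul (x^2)
    have hAB : IntegrableOn (fun y => w y * y ^ 2 - (2 * x) * (w y * y)) S := h2.sub hB
    rw [e, MeasureTheory.integral_const_mul, integral_add hAB hC, integral_sub h2 hB,
      MeasureTheory.integral_const_mul, MeasureTheory.integral_const_mul]
  simp_rw [inner]
  have e2 : (fun x => w x * ((∫ y in S, w y * y ^ 2) - 2 * x * (∫ y in S, w y * y)
        + x ^ 2 * (∫ y in S, w y)))
      = fun x => ((∫ y in S, w y * y ^ 2) * w x
          - (2 * (∫ y in S, w y * y)) * (w x * x)) + (∫ y in S, w y) * (w x * x ^ 2) := by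
    funext x; ring
  have hA : IntegrableOn (fun x => (∫ y in S, w y * y ^ 2) * w x) S := h0.const_mul _
  have hB : IntegrableOn (fun x => (2 * (∫ y in S, w y * y)) * (w x * x)) S := h1.const_mul _
  have hC : IntegrableOn (fun x => (∫ y in S, w y) * (w x * x ^ 2)) S := h2.const_mul _
  have hAB : IntegrableOn (fun x => (∫ y in S, w y * y ^ 2) * w x
      - (2 * (∫ y in S, w y * y)) * (w x * x)) S := hA.sub hB
  rw [e2, integral_add hAB hC, integral_sub hA hB,
    MeasureTheory.integral_const_mul, MeasureTheory.integral_const_mul,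
    MeasureTheory.integral_const_mul]
  ring

lemma w_int {α β : ℝ} (hα : -1 < α) (hβ : -1 < β) :
    IntervalIntegrable (fun x : ℝ => (1 - x) ^ α * (1 + x) ^ β) volume (-1) 1 := by
  have h1 : IntervalIntegrable (fun x : ℝ => (1 - x) ^ α * (1 + x) ^ β) volume (-1) 0 := by
    have hi : IntervalIntegrable (fun x : ℝ => (1 + x) ^ β) volume (-1) 0 := by
      have h0 : IntervalIntegrable (fun t : ℝ => t ^ β) volume 0 1 :=
        intervalIntegrable_rpow' (by linarith)
      have h2 := h0.comp_add_right 1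
      norm_num at h2
      have : (fun x : ℝ => (1 + x) ^ β) = fun x : ℝ => (x + 1) ^ β := by
        funext x; rw [add_comm]
      rw [this]
      exact h2
    have hc : ContinuousOn (fun x : ℝ => (1 - x) ^ α) (Set.uIcc (-1) 0) := by
      apply ContinuousOn.rpow_const (by fun_prop)
      intro x hx
      rw [Set.uIcc_of_le (by norm_num)] at hx
      left; intro h; nlinarith [hx.2]
    exact hi.continuousOn_mul hc
  have h2 : IntervalIntegrable (fun x : ℝ => (1 - x) ^ α * (1 + x) ^ β) volume 0 1 := by
    have hi : IntervalIntegrable (fun x : ℝ => (1 - x) ^ α) volume 0 1 := by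
      have h0 : IntervalIntegrable (fun t : ℝ => t ^ α) volume 0 1 :=
        intervalIntegrable_rpow' (by linarith)
      have h2 := h0.comp_sub_left 1
      norm_num at h2
      exact h2.symm
    have hc : ContinuousOn (fun x : ℝ => (1 + x) ^ β) (Set.uIcc 0 1) := by
      apply ContinuousOn.rpow_const (by fun_prop)
      intro x hx
      rw [Set.uIcc_of_le (by norm_num)] at hx
      left; intro h; nlinarith [hx.1]
    exact hi.mul_continuousOn hc
  exact h1.trans h2

lemma w_mom {α β : ℝ} (hα : -1 < α) (hβ : -1 < β) (G : ℝ → ℝ) (hG : Continuous G)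
    {r : ℝ} (hr0 : 0 < r) (hr1 : r ≤ 1) :
    IntegrableOn (fun x : ℝ => (1 - x) ^ α * (1 + x) ^ β * G x) (Set.Icc (-r) r) := by
  have hw := (w_int hα hβ).mono_set (by
    rw [Set.uIcc_of_le (by linarith : -r ≤ r), Set.uIcc_of_le (by norm_num : (-1:ℝ) ≤ 1)]
    exact Set.Icc_subset_Icc (by linarith) hr1)
  have h := hw.mul_continuousOn hG.continuousOn
  rw [integrableOn_Icc_iff_integrableOn_Ioc]
  exact (intervalIntegrable_iff_integrableOn_Ioc_of_le (by linarith)).mp h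

lemma icc_int (f : ℝ → ℝ) {r : ℝ} (hr : 0 ≤ r) :
    (∫ x in Set.Icc (-r) r, f x) = ∫ x in (-r)..r, f x := by
  rw [intervalIntegral.integral_of_le (by linarith), integral_Icc_eq_integral_Ioc]

lemma bfun_split_int {a b p q : ℝ} (ha : 0 < a) (hb : 0 < b) (hp : 0 ≤ p) (hq : q ≤ 1)
    (hpq : p ≤ q) :
    ∫ t in p..q, bfun a b t
      = (∫ t in p..q, bfun (a+1) b t) + ∫ t in p..q, bfun a (b+1) t := by
  rw [← intervalIntegral.integral_add (bfun_int_sub (by linarith) hb hp hq hpq)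
    (bfun_int_sub ha (by linarith) hp hq hpq)]
  exact intervalIntegral.integral_congr fun t ht => by
    rw [Set.uIcc_of_le hpq] at ht
    exact bfun_split ha hb (by linarith [ht.1]) (by linarith [ht.2])

lemma reg_diff {a b p q : ℝ} (ha : 0 < a) (hb : 0 < b) (hp : 0 ≤ p) (hpq : p ≤ q)
    (hq : q ≤ 1) :
    regIncBeta q a b - regIncBeta p a b
      = (∫ t in p..q, bfun a b t) / (∫ t in (0:ℝ)..1, bfun a b t) := by
  have e0 : ∀ x : ℝ, (∫ t in (0:ℝ)..x, t ^ (a-1) * (1-t) ^ (b-1))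
      = ∫ t in (0:ℝ)..x, bfun a b t := fun x => rfl
  rw [regIncBeta, regIncBeta, e0, e0, e0, div_sub_div_same]
  congr 1
  have := intervalIntegral.integral_add_adjacent_intervals
    (bfun_int_sub ha hb le_rfl (le_trans hpq hq) hp)
    (bfun_int_sub ha hb hp hq hpq)
  linarith

end JUE

open JUE

/-- The probability that both eigenvalues of the `N = 2` Jacobi unitary ensemble lie in
`(−s,s)`, expressed via regularized incomplete beta functions (Proposition 10). -/
theorem jue_N2_end_intervals (α β s : ℝ) (hα : -1 < α) (hβ : -1 < β)
    (hs0 : 0 < s) (hs1 : s < 1) :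
    (∫ l in Set.Icc (-s) s ×ˢ Set.Icc (-s) s,
        (1 - l.1) ^ α * (1 + l.1) ^ β * ((1 - l.2) ^ α * (1 + l.2) ^ β) * (l.2 - l.1) ^ 2) /
      (∫ l in Set.Icc (-1:ℝ) 1 ×ˢ Set.Icc (-1:ℝ) 1,
        (1 - l.1) ^ α * (1 + l.1) ^ β * ((1 - l.2) ^ α * (1 + l.2) ^ β) * (l.2 - l.1) ^ 2) =
    (α + β + 3) *
        (regIncBeta ((1 + s) / 2) (α + 1) (β + 2)
          - regIncBeta ((1 - s) / 2) (α + 1) (β + 2)) *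
        (regIncBeta ((1 + s) / 2) (α + 2) (β + 1)
          - regIncBeta ((1 - s) / 2) (α + 2) (β + 1))
      - (α + β + 2) *
        (regIncBeta ((1 + s) / 2) (α + 2) (β + 2)
          - regIncBeta ((1 - s) / 2) (α + 2) (β + 2)) *
        (regIncBeta ((1 + s) / 2) (α + 1) (β + 1)
          - regIncBeta ((1 - s) / 2) (α + 1) (β + 1)) := by
  have hs1' : s ≤ 1 := hs1.le
  have ha1 : (0:ℝ) < α + 1 := by linarith
  have hb1 : (0:ℝ) < β + 1 := by linarith
  have ha2 : (0:ℝ) < α + 2 := by linarith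
  have hb2 : (0:ℝ) < β + 2 := by linarith
  -- integrability
  have h0s : IntegrableOn (fun x : ℝ => (1 - x) ^ α * (1 + x) ^ β) (Set.Icc (-s) s) := by
    simpa using w_mom hα hβ (fun _ => 1) continuous_const hs0 hs1'
  have h1s : IntegrableOn (fun x : ℝ => (1 - x) ^ α * (1 + x) ^ β * x) (Set.Icc (-s) s) :=
    w_mom hα hβ (fun x => x) continuous_id hs0 hs1'
  have h2s : IntegrableOn (fun x : ℝ => (1 - x) ^ α * (1 + x) ^ β * x ^ 2) (Set.Icc (-s) s) :=
    w_mom hα hβ (fun x => x ^ 2) (continuous_pow 2) hs0 hs1'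
  have h01 : IntegrableOn (fun x : ℝ => (1 - x) ^ α * (1 + x) ^ β) (Set.Icc (-(1:ℝ)) 1) := by
    simpa using w_mom hα hβ (fun _ => 1) continuous_const one_pos le_rfl
  have h11 : IntegrableOn (fun x : ℝ => (1 - x) ^ α * (1 + x) ^ β * x) (Set.Icc (-(1:ℝ)) 1) :=
    w_mom hα hβ (fun x => x) continuous_id one_pos le_rfl
  have h21 : IntegrableOn (fun x : ℝ => (1 - x) ^ α * (1 + x) ^ β * x ^ 2)
      (Set.Icc (-(1:ℝ)) 1) :=
    w_mom hα hβ (fun x => x ^ 2) (continuous_pow 2) one_pos le_rfl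
  have hNum : (∫ l in Set.Icc (-s) s ×ˢ Set.Icc (-s) s,
        (1 - l.1) ^ α * (1 + l.1) ^ β * ((1 - l.2) ^ α * (1 + l.2) ^ β) * (l.2 - l.1) ^ 2)
      = 2 * ((∫ x in Set.Icc (-s) s, (1 - x) ^ α * (1 + x) ^ β)
            * (∫ x in Set.Icc (-s) s, (1 - x) ^ α * (1 + x) ^ β * x ^ 2)
          - (∫ x in Set.Icc (-s) s, (1 - x) ^ α * (1 + x) ^ β * x) ^ 2) :=
    fubini_eq _ h0s h1s h2s
  have hDen : (∫ l in Set.Icc (-(1:ℝ)) 1 ×ˢ Set.Icc (-(1:ℝ)) 1,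
        (1 - l.1) ^ α * (1 + l.1) ^ β * ((1 - l.2) ^ α * (1 + l.2) ^ β) * (l.2 - l.1) ^ 2)
      = 2 * ((∫ x in Set.Icc (-(1:ℝ)) 1, (1 - x) ^ α * (1 + x) ^ β)
            * (∫ x in Set.Icc (-(1:ℝ)) 1, (1 - x) ^ α * (1 + x) ^ β * x ^ 2)
          - (∫ x in Set.Icc (-(1:ℝ)) 1, (1 - x) ^ α * (1 + x) ^ β * x) ^ 2) :=
    fubini_eq _ h01 h11 h21
  rw [hNum, hDen,
    icc_int (fun x : ℝ => (1 - x) ^ α * (1 + x) ^ β) hs0.le,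
    icc_int (fun x : ℝ => (1 - x) ^ α * (1 + x) ^ β * x) hs0.le,
    icc_int (fun x : ℝ => (1 - x) ^ α * (1 + x) ^ β * x ^ 2) hs0.le,
    icc_int (fun x : ℝ => (1 - x) ^ α * (1 + x) ^ β) (by norm_num : (0:ℝ) ≤ 1),
    icc_int (fun x : ℝ => (1 - x) ^ α * (1 + x) ^ β * x) (by norm_num : (0:ℝ) ≤ 1),
    icc_int (fun x : ℝ => (1 - x) ^ α * (1 + x) ^ β * x ^ 2) (by norm_num : (0:ℝ) ≤ 1),
    M0_eq hα hβ hs0 hs1', M1_eq hα hβ hs0 hs1', M2_eq hα hβ hs0 hs1',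
    M0_eq hα hβ one_pos le_rfl, M1_eq hα hβ one_pos le_rfl, M2_eq hα hβ one_pos le_rfl]
  simp only [show ((1:ℝ) - 1)/2 = 0 by norm_num, show ((1:ℝ) + 1)/2 = 1 by norm_num]
  have hp : (0:ℝ) ≤ (1 - s)/2 := by linarith
  have hq : (1 + s)/2 ≤ 1 := by linarith
  have hpq : (1 - s)/2 ≤ (1 + s)/2 := by linarith
  rw [reg_diff ha1 hb2 hp hpq hq, reg_diff ha2 hb1 hp hpq hq,
    reg_diff ha2 hb2 hp hpq hq, reg_diff ha1 hb1 hp hpq hq]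
  -- key relations
  have hsK₀ := bfun_split_int (p := (1-s)/2) (q := (1+s)/2) ha1 hb1 hp hq hpq
  have hsB₀ := bfun_split_int (p := (0:ℝ)) (q := 1) ha1 hb1 le_rfl le_rfl zero_le_one
  have hkey₀ := beta_key ha1 hb1
  simp only [show (α + 1 + 1 : ℝ) = α + 2 by ring, show (β + 1 + 1 : ℝ) = β + 2 by ring,
    show (α + 1 + (β + 1) + 1 : ℝ) = α + β + 3 by ring,
    show (α + 1 + (β + 1) : ℝ) = α + β + 2 by ring] at hsK₀ hsB₀ hkey₀
  set C := (2:ℝ) ^ (α + β + 1) with hCdef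
  set K1 := ∫ t in ((1-s)/2)..((1+s)/2), bfun (α+1) (β+1) t with hK1
  set K2 := ∫ t in ((1-s)/2)..((1+s)/2), bfun (α+1) (β+2) t with hK2
  set K3 := ∫ t in ((1-s)/2)..((1+s)/2), bfun (α+2) (β+1) t with hK3
  set K4 := ∫ t in ((1-s)/2)..((1+s)/2), bfun (α+2) (β+2) t with hK4
  set B1 := ∫ t in (0:ℝ)..1, bfun (α+1) (β+1) t with hB1
  set B2 := ∫ t in (0:ℝ)..1, bfun (α+1) (β+2) t with hB2
  set B3 := ∫ t in (0:ℝ)..1, bfun (α+2) (β+1) t with hB3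
  set B4 := ∫ t in (0:ℝ)..1, bfun (α+2) (β+2) t with hB4
  have hC : 0 < C := Real.rpow_pos_of_pos two_pos _
  have hB1p : 0 < B1 := bfun_pos_int ha1 hb1
  have hB2p : 0 < B2 := bfun_pos_int ha1 hb2
  have hB3p : 0 < B3 := bfun_pos_int ha2 hb1
  have hB4p : 0 < B4 := bfun_pos_int ha2 hb2
  have hQc : (α + β + 3) * (B2 * B3 - B4 * B1) = B2 * B3 := by linear_combination (-1) * hkey₀
  have hQ : 0 < B2 * B3 - B4 * B1 := by nlinarith [mul_pos hB2p hB3p]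
  have hNum' : 2 * ((C * K1) * (C * (K1 - 4 * K4)) - (C * (K2 - K3)) ^ 2)
      = (8 * C ^ 2) * (K2 * K3 - K4 * K1) := by
    linear_combination (2 * C ^ 2 * (K1 + K2 + K3)) * hsK₀
  have hDen' : 2 * ((C * B1) * (C * (B1 - 4 * B4)) - (C * (B2 - B3)) ^ 2)
      = (8 * C ^ 2) * (B2 * B3 - B4 * B1) := by
    linear_combination (2 * C ^ 2 * (B1 + B2 + B3)) * hsB₀
  rw [hNum', hDen', mul_div_mul_left _ _ (by positivity : (8:ℝ) * C ^ 2 ≠ 0)]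
  field_simp
  linear_combination (-(K2 * K3 - K4 * K1) * B4 * B1) * hQc
    + (-(B2 * B3 - B4 * B1) * K4 * K1) * hkey₀
end

section
/- Let α, β > −1 and 0 < s < 1, let J = [−1,−s] ∪ [s,1], and define E₂(s) = (∫_{J×J} (1−λ₁)^α(1+λ₁)^β (1−λ₂)^α(1+λ₂)^β (λ₂−λ₁)² dλ₁dλ₂) / (∫_{[−1,1]²} (1−λ₁)^α(1+λ₁)^β (1−λ₂)^α(1+λ₂)^β (λ₂−λ₁)² dλ₁dλ₂). Then E₂(s) = (α+β+3)·[1 + I_{(1−s)/2}(α+1,β+2) − I_{(1+s)/2}(α+1,β+2)]·[1 + I_{(1−s)/2}(α+2,β+1) − I_{(1+s)/2}(α+2,β+1)] − (α+β+2)·[1 + I_{(1−s)/2}(α+2,β+2) − I_{(1+s)/2}(α+2,β+2)]·[1 + I_{(1−s)/2}(α+1,β+1) − I_{(1+s)/2}(α+1,β+1)]. -/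
/-!
With `a = 1 - x` and `b = 1 + x` one has `a + b = 2`, so
`(y - x)² = ((1 - x) - (1 - y)) ((1 + y) - (1 + x))`. Expanding this product absorbs the
linear factors into the Jacobi weights, and the double integral over `A × A` becomes
`2 (W₁₀ W₀₁ - W₁₁ W₀₀)`, where `W_pq` integrates the weight with exponents `α + p`, `β + q`
over `A`. The substitution `x = 1 - 2t` turns each `W_pq` into a beta integral: the complete one
for `A = [-1, 1]`, the two tails of the incomplete one for `A = [-1, -s] ∪ [s, 1]`. The recurrence
`B(a + 1, b) = a B(a, b) / (a + b)` then evaluates the normalisation.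
-/

open MeasureTheory

open Set intervalIntegral ProbabilityTheory

theorem intervalIntegrable_sub_rpow_mul_sub_rpow {a b p q : ℝ} (hab : a < b)
    (hp : -1 < p) (hq : -1 < q) :
    IntervalIntegrable (fun x => (x - a) ^ p * (b - x) ^ q) volume a b := by
  set m := (a + b) / 2 with hm
  have hleft : IntervalIntegrable (fun x => (x - a) ^ p * (b - x) ^ q) volume a m := by
    have h := (intervalIntegrable_rpow' hp (a := 0) (b := m - a)).comp_sub_right a
    rw [zero_add, sub_add_cancel] at h
    refine h.mul_continuousOn (ContinuousOn.rpow_const (by fun_prop) fun x hx => Or.inl ?_)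
    rw [uIcc_of_le (by linarith)] at hx
    exact (sub_pos.2 (by linarith [hx.2])).ne'
  have hright : IntervalIntegrable (fun x => (x - a) ^ p * (b - x) ^ q) volume m b := by
    have h := (intervalIntegrable_rpow' hq (a := 0) (b := b - m)).comp_sub_left b
    rw [sub_zero, sub_sub_cancel] at h
    refine h.symm.continuousOn_mul (ContinuousOn.rpow_const (by fun_prop) fun x hx => Or.inl ?_)
    rw [uIcc_of_le (by linarith)] at hx
    exact (sub_pos.2 (by linarith [hx.1])).ne'
  exact hleft.trans hright

theorem intervalIntegrable_rpow_mul_one_sub_rpow {p q : ℝ} (hp : -1 < p) (hq : -1 < q) :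
    IntervalIntegrable (fun t => t ^ p * (1 - t) ^ q) volume 0 1 := by
  simpa using intervalIntegrable_sub_rpow_mul_sub_rpow zero_lt_one hp hq

-- Reducible, so that it matches the integrands of the statement when rewriting.
noncomputable abbrev jacobiWeight (α β x : ℝ) : ℝ := (1 - x) ^ α * (1 + x) ^ β

theorem integrableOn_jacobiWeight {α β : ℝ} (hα : -1 < α) (hβ : -1 < β) {A : Set ℝ}
    (hA : A ⊆ Icc (-1) 1) : IntegrableOn (jacobiWeight α β) A := by
  have h := intervalIntegrable_sub_rpow_mul_sub_rpow (by norm_num : (-1:ℝ) < 1) hβ hα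
  have heq : (fun x : ℝ => (x - -1) ^ β * (1 - x) ^ α) = jacobiWeight α β := by
    ext x; rw [jacobiWeight, sub_neg_eq_add, add_comm, mul_comm]
  rw [heq, intervalIntegrable_iff_integrableOn_Icc_of_le (by norm_num)] at h
  exact h.mono_set hA

theorem jacobiWeight_add_one_left {α β x : ℝ} (hα : α + 1 ≠ 0) (hx : x ≤ 1) :
    jacobiWeight (α + 1) β x = (1 - x) * jacobiWeight α β x := by
  rw [jacobiWeight, Real.rpow_add_one' (by linarith) hα]; ring

theorem jacobiWeight_add_one_right {α β x : ℝ} (hβ : β + 1 ≠ 0) (hx : -1 ≤ x) :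
    jacobiWeight α (β + 1) x = (1 + x) * jacobiWeight α β x := by
  rw [jacobiWeight, Real.rpow_add_one' (by linarith) hβ]; ring

theorem integral_prod_mul_add_mul_swap_sub {X : Type*} [MeasurableSpace X] {μ : Measure X}
    [SFinite μ] {f g h k : X → ℝ} (hf : Integrable f μ) (hg : Integrable g μ)
    (hh : Integrable h μ) (hk : Integrable k μ) :
    ∫ z, (f z.1 * g z.2 + g z.1 * f z.2 - (h z.1 * k z.2 + k z.1 * h z.2)) ∂μ.prod μ =
      2 * ((∫ x, f x ∂μ) * (∫ x, g x ∂μ) - (∫ x, h x ∂μ) * ∫ x, k x ∂μ) := by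
  have hfg : Integrable (fun z : X × X => f z.1 * g z.2 + g z.1 * f z.2) (μ.prod μ) :=
    (hf.mul_prod hg).add (hg.mul_prod hf)
  have hhk : Integrable (fun z : X × X => h z.1 * k z.2 + k z.1 * h z.2) (μ.prod μ) :=
    (hh.mul_prod hk).add (hk.mul_prod hh)
  rw [integral_sub hfg hhk, integral_add (hf.mul_prod hg) (hg.mul_prod hf),
    integral_add (hh.mul_prod hk) (hk.mul_prod hh)]
  simp only [integral_prod_mul]
  ring

theorem jacobiWeight_mul_jacobiWeight_mul_sq_sub {α β x y : ℝ} (hα : α + 1 ≠ 0)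
    (hβ : β + 1 ≠ 0) (hx : x ∈ Icc (-1) 1) (hy : y ∈ Icc (-1) 1) :
    jacobiWeight α β x * jacobiWeight α β y * (y - x) ^ 2 =
      jacobiWeight (α + 1) β x * jacobiWeight α (β + 1) y
        + jacobiWeight α (β + 1) x * jacobiWeight (α + 1) β y
        - (jacobiWeight (α + 1) (β + 1) x * jacobiWeight α β y
          + jacobiWeight α β x * jacobiWeight (α + 1) (β + 1) y) := by
  simp only [jacobiWeight_add_one_left hα hx.2, jacobiWeight_add_one_left hα hy.2,
    jacobiWeight_add_one_right hβ hx.1, jacobiWeight_add_one_right hβ hy.1]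
  ring

theorem setIntegral_prod_jacobiWeight_mul_sq_sub {α β : ℝ} (hα : -1 < α) (hβ : -1 < β)
    {A : Set ℝ} (hA : MeasurableSet A) (hA1 : A ⊆ Icc (-1) 1) :
    ∫ l in A ×ˢ A, jacobiWeight α β l.1 * jacobiWeight α β l.2 * (l.2 - l.1) ^ 2 =
      2 * ((∫ x in A, jacobiWeight (α + 1) β x) * (∫ x in A, jacobiWeight α (β + 1) x)
        - (∫ x in A, jacobiWeight (α + 1) (β + 1) x) * ∫ x in A, jacobiWeight α β x) := by
  have hα1 : -1 < α + 1 := by linarith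
  have hβ1 : -1 < β + 1 := by linarith
  rw [setIntegral_congr_fun (hA.prod hA) fun l hl => jacobiWeight_mul_jacobiWeight_mul_sq_sub
    (by linarith : (0:ℝ) < α + 1).ne' (by linarith : (0:ℝ) < β + 1).ne' (hA1 hl.1) (hA1 hl.2),
    Measure.volume_eq_prod, ← Measure.prod_restrict]
  exact integral_prod_mul_add_mul_swap_sub (integrableOn_jacobiWeight hα1 hβ hA1)
    (integrableOn_jacobiWeight hα hβ1 hA1) (integrableOn_jacobiWeight hα1 hβ1 hA1)
    (integrableOn_jacobiWeight hα hβ hA1)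

theorem integral_jacobiWeight (α β : ℝ) {u v : ℝ} (hu : u ∈ Icc (-1) 1)
    (hv : v ∈ Icc (-1) 1) :
    ∫ x in u..v, jacobiWeight α β x =
      2 ^ α * 2 ^ β * 2 * ∫ t in (1 - v) / 2..(1 - u) / 2, t ^ α * (1 - t) ^ β := by
  have hsubst : ∫ t in (1 - v) / 2..(1 - u) / 2, jacobiWeight α β (1 - 2 * t) =
      2⁻¹ * ∫ x in u..v, jacobiWeight α β x := by
    rw [integral_comp_sub_mul _ two_ne_zero, smul_eq_mul]
    congr 2 <;> ring
  have hscale : ∀ t ∈ uIcc ((1 - v) / 2) ((1 - u) / 2),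
      jacobiWeight α β (1 - 2 * t) = 2 ^ α * 2 ^ β * (t ^ α * (1 - t) ^ β) := by
    intro t ht
    have ht' : t ∈ Icc (0:ℝ) 1 :=
      uIcc_subset_Icc ⟨by linarith [hv.2], by linarith [hv.1]⟩
        ⟨by linarith [hu.2], by linarith [hu.1]⟩ ht
    rw [jacobiWeight, show 1 - (1 - 2 * t) = 2 * t by ring,
      show 1 + (1 - 2 * t) = 2 * (1 - t) by ring, Real.mul_rpow zero_le_two ht'.1,
      Real.mul_rpow zero_le_two (by linarith [ht'.2])]
    ring
  rw [integral_congr hscale, intervalIntegral.integral_const_mul] at hsubst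
  linear_combination (-2) * hsubst

theorem setIntegral_Icc_jacobiWeight (α β : ℝ) {u v : ℝ} (huv : u ≤ v) (hu : -1 ≤ u)
    (hv : v ≤ 1) :
    ∫ x in Icc u v, jacobiWeight α β x =
      2 ^ α * 2 ^ β * 2 * ∫ t in (1 - v) / 2..(1 - u) / 2, t ^ α * (1 - t) ^ β := by
  rw [integral_Icc_eq_integral_Ioc, ← integral_of_le huv,
    integral_jacobiWeight α β ⟨hu, huv.trans hv⟩ ⟨hu.trans huv, hv⟩]

theorem setIntegral_Icc_union_Icc_jacobiWeight {α β s : ℝ} (hα : -1 < α) (hβ : -1 < β)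
    (hs0 : 0 < s) (hs1 : s ≤ 1) :
    ∫ x in Icc (-1) (-s) ∪ Icc s 1, jacobiWeight α β x =
      2 ^ α * 2 ^ β * 2 * ((∫ t in (0:ℝ)..(1 - s) / 2, t ^ α * (1 - t) ^ β)
        + ∫ t in (1 + s) / 2..1, t ^ α * (1 - t) ^ β) := by
  have hdisj : Disjoint (Icc (-1:ℝ) (-s)) (Icc s 1) :=
    disjoint_left.2 fun x hx hx' => by linarith [hx.2, hx'.1]
  rw [setIntegral_union hdisj measurableSet_Icc
    (integrableOn_jacobiWeight hα hβ (Icc_subset_Icc le_rfl (by linarith)))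
    (integrableOn_jacobiWeight hα hβ (Icc_subset_Icc (by linarith) le_rfl)),
    setIntegral_Icc_jacobiWeight α β (by linarith) le_rfl (by linarith),
    setIntegral_Icc_jacobiWeight α β hs1 (by linarith) le_rfl]
  norm_num
  ring

theorem integral_rpow_mul_one_sub_rpow_eq_beta {p q : ℝ} (hp : -1 < p) (hq : -1 < q) :
    ∫ t in (0:ℝ)..1, t ^ p * (1 - t) ^ q = beta (p + 1) (q + 1) := by
  rw [beta_eq_betaIntegralReal _ _ (by linarith) (by linarith), Complex.betaIntegral]
  have h : ∫ x in (0:ℝ)..1,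
        (x : ℂ) ^ (((p + 1 : ℝ) : ℂ) - 1) * (1 - (x : ℂ)) ^ (((q + 1 : ℝ) : ℂ) - 1) =
      ((∫ t in (0:ℝ)..1, t ^ p * (1 - t) ^ q : ℝ) : ℂ) := by
    rw [← integral_ofReal]
    refine integral_congr fun t ht => ?_
    rw [uIcc_of_le zero_le_one] at ht
    push_cast
    rw [Complex.ofReal_cpow ht.1, Complex.ofReal_cpow (by linarith [ht.2])]
    push_cast
    ring_nf
  rw [h, Complex.ofReal_re]

namespace ProbabilityTheory

theorem beta_add_one_left {a b : ℝ} (ha : a ≠ 0) (hab : a + b ≠ 0) :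
    beta (a + 1) b = a / (a + b) * beta a b := by
  rw [beta, beta, Real.Gamma_add_one ha, add_right_comm, Real.Gamma_add_one hab]
  field_simp

theorem beta_add_one_right {a b : ℝ} (hb : b ≠ 0) (hab : a + b ≠ 0) :
    beta a (b + 1) = b / (a + b) * beta a b := by
  rw [beta, beta, Real.Gamma_add_one hb, ← add_assoc, Real.Gamma_add_one hab]
  field_simp

end ProbabilityTheory

theorem one_add_regIncBeta_sub_regIncBeta {p q : ℝ} (x : ℝ) {y : ℝ} (hp : -1 < p)
    (hq : -1 < q) (hy : y ∈ Icc (0:ℝ) 1) :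
    1 + regIncBeta x (p + 1) (q + 1) - regIncBeta y (p + 1) (q + 1) =
      ((∫ t in (0:ℝ)..x, t ^ p * (1 - t) ^ q) + ∫ t in y..1, t ^ p * (1 - t) ^ q)
        / beta (p + 1) (q + 1) := by
  have hint := intervalIntegrable_rpow_mul_one_sub_rpow hp hq
  have hsplit := integral_add_adjacent_intervals
    (hint.mono_set (uIcc_subset_uIcc_left (by simpa [uIcc_of_le zero_le_one] using hy)))
    (hint.mono_set (uIcc_subset_uIcc_right (by simpa [uIcc_of_le zero_le_one] using hy)))
  have hB := beta_pos (α := p + 1) (β := q + 1) (by linarith) (by linarith)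
  simp only [regIncBeta, add_sub_cancel_right]
  rw [integral_rpow_mul_one_sub_rpow_eq_beta hp hq] at hsplit ⊢
  field_simp
  linarith

theorem setIntegral_Icc_neg_one_one_jacobiWeight {α β : ℝ} (hα : -1 < α) (hβ : -1 < β) :
    ∫ x in Icc (-1:ℝ) 1, jacobiWeight α β x =
      2 ^ α * 2 ^ β * 2 * beta (α + 1) (β + 1) := by
  rw [setIntegral_Icc_jacobiWeight α β (by norm_num) le_rfl le_rfl,
    ← integral_rpow_mul_one_sub_rpow_eq_beta hα hβ]
  norm_num

/-- The probability that both eigenvalues of the `N = 2` Jacobi unitary ensemble lie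
outside `(−s,s)`, expressed via regularized incomplete beta functions (Proposition 15). -/
theorem jue_N2_interior_interval (α β s : ℝ) (hα : -1 < α) (hβ : -1 < β)
    (hs0 : 0 < s) (hs1 : s < 1) :
    (∫ l in (Set.Icc (-1:ℝ) (-s) ∪ Set.Icc s 1) ×ˢ (Set.Icc (-1:ℝ) (-s) ∪ Set.Icc s 1),
        (1 - l.1) ^ α * (1 + l.1) ^ β * ((1 - l.2) ^ α * (1 + l.2) ^ β) * (l.2 - l.1) ^ 2) /
      (∫ l in Set.Icc (-1:ℝ) 1 ×ˢ Set.Icc (-1:ℝ) 1,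
        (1 - l.1) ^ α * (1 + l.1) ^ β * ((1 - l.2) ^ α * (1 + l.2) ^ β) * (l.2 - l.1) ^ 2) =
    (α + β + 3) *
        (1 + regIncBeta ((1 - s) / 2) (α + 1) (β + 2)
          - regIncBeta ((1 + s) / 2) (α + 1) (β + 2)) *
        (1 + regIncBeta ((1 - s) / 2) (α + 2) (β + 1)
          - regIncBeta ((1 + s) / 2) (α + 2) (β + 1))
      - (α + β + 2) *
        (1 + regIncBeta ((1 - s) / 2) (α + 2) (β + 2)
          - regIncBeta ((1 + s) / 2) (α + 2) (β + 2)) *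
        (1 + regIncBeta ((1 - s) / 2) (α + 1) (β + 1)
          - regIncBeta ((1 + s) / 2) (α + 1) (β + 1)) := by
  have hα1 : -1 < α + 1 := by linarith
  have hβ1 : -1 < β + 1 := by linarith
  have hJ : Icc (-1:ℝ) (-s) ∪ Icc s 1 ⊆ Icc (-1) 1 :=
    union_subset (Icc_subset_Icc le_rfl (by linarith)) (Icc_subset_Icc (by linarith) le_rfl)
  rw [setIntegral_prod_jacobiWeight_mul_sq_sub hα hβ
      (measurableSet_Icc.union measurableSet_Icc) hJ,
    setIntegral_prod_jacobiWeight_mul_sq_sub hα hβ measurableSet_Icc subset_rfl,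
    show β + 2 = β + 1 + 1 by ring, show α + 2 = α + 1 + 1 by ring]
  simp only [setIntegral_Icc_union_Icc_jacobiWeight (hs0 := hs0) (hs1 := hs1.le),
    setIntegral_Icc_neg_one_one_jacobiWeight,
    one_add_regIncBeta_sub_regIncBeta (y := (1 + s) / 2) _ _ _ ⟨by linarith, by linarith⟩,
    hα, hβ, hα1, hβ1]
  have ha : 0 < α + 1 := by linarith
  have hb : 0 < β + 1 := by linarith
  rw [beta_add_one_left (b := β + 1 + 1) ha.ne' (by linarith),
    beta_add_one_right (a := α + 1) hb.ne' (by linarith),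
    beta_add_one_left (b := β + 1) ha.ne' (by linarith), Real.rpow_add_one two_ne_zero α,
    Real.rpow_add_one two_ne_zero β]
  have hB := beta_pos ha hb
  have h2 : α + 1 + (β + 1) ≠ 0 := by linarith
  have h3 : α + 1 + (β + 1 + 1) ≠ 0 := by linarith
  field_simp
  ring
end

section
/- Let k, n be real parameters and let y : (0,∞) → ℝ be three times differentiable with y′(x)·(y′(x) − 1) ≠ 0 for all x > 0, satisfying y‴ = (1/2)(1/y′ + 1/(y′−1))(y″)² − y″/x − [2(k+n)/x]·y′(y′−1) + [(x+n)/(2x²)]·(n − x + 2y) − (n+y)²/(2x² y′) − (x−y)²/(2x²(y′−1)) for all x > 0. Then there exists a constant K₁ such that for all x > 0: x²(y″)² = −4(k+n)x(y′)³ + {4(k+n)y + x² + 2(2k+3n)x}(y′)² − {2(x+2k+3n)y + 2nx + n²}y′ + (y+n)² − 4K₁ y′(y′ − 1). -/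
/-!
Solving (5.24) for `K₁` expresses `K₁` as a rational function of `(x, y, y', y'')`. Its
derivative along any curve, after substituting (5.23) for `y'''`, vanishes identically; so along
a solution it is constant on the connected set `(0, ∞)`, and that constant is `K₁`.
-/

namespace TracyWidom

/- `u` and `v` stand for `y'` and `y''`: `rhs` is the right-hand side of (5.23) and
`firstIntegral` is (5.24) solved for `K₁`. -/

noncomputable def firstIntegral (k n x y u v : ℝ) : ℝ :=
  ((y + n) ^ 2 - x ^ 2 * v ^ 2 - 4 * (k + n) * x * u ^ 3
      + (4 * (k + n) * y + x ^ 2 + 2 * (2 * k + 3 * n) * x) * u ^ 2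
      - (2 * (x + 2 * k + 3 * n) * y + 2 * n * x + n ^ 2) * u) / (4 * u * (u - 1))

noncomputable def rhs (k n x y u v : ℝ) : ℝ :=
  (1 / 2) * (1 / u + 1 / (u - 1)) * v ^ 2 - v / x - 2 * (k + n) / x * u * (u - 1)
    + (x + n) / (2 * x ^ 2) * (n - x + 2 * y) - (n + y) ^ 2 / (2 * x ^ 2 * u)
    - (x - y) ^ 2 / (2 * x ^ 2 * (u - 1))

theorem sq_mul_sq_eq_of_firstIntegral {k n x y u v : ℝ} (hu : u * (u - 1) ≠ 0) :
    x ^ 2 * v ^ 2 = -4 * (k + n) * x * u ^ 3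
      + (4 * (k + n) * y + x ^ 2 + 2 * (2 * k + 3 * n) * x) * u ^ 2
      - (2 * (x + 2 * k + 3 * n) * y + 2 * n * x + n ^ 2) * u
      + (y + n) ^ 2 - 4 * firstIntegral k n x y u v * u * (u - 1) := by
  obtain ⟨hu₀, hu₁⟩ := mul_ne_zero_iff.1 hu
  unfold firstIntegral
  field_simp
  ring

theorem hasDerivAt_firstIntegral (k n : ℝ) {Y U V : ℝ → ℝ} {x : ℝ} (hx : x ≠ 0)
    (hne : U x * (U x - 1) ≠ 0) (hY : HasDerivAt Y (U x) x) (hU : HasDerivAt U (V x) x)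
    (hV : HasDerivAt V (rhs k n x (Y x) (U x) (V x)) x) :
    HasDerivAt (fun t => firstIntegral k n t (Y t) (U t) (V t)) 0 x := by
  obtain ⟨hu₀, hu₁⟩ := mul_ne_zero_iff.1 hne
  have hX : HasDerivAt (fun t : ℝ => t) 1 x := hasDerivAt_id' x
  have hnum := (((((hY.add_const n).pow 2).sub ((hX.pow 2).mul (hV.pow 2))).sub
      ((hX.const_mul (4 * (k + n))).mul (hU.pow 3))).add
      ((((hY.const_mul (4 * (k + n))).add (hX.pow 2)).add
        (hX.const_mul (2 * (2 * k + 3 * n)))).mul (hU.pow 2))).sub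
      (((((hX.add_const (2 * k + 3 * n)).const_mul 2).mul hY).add
        ((hX.const_mul (2 * n)).add_const (n ^ 2))).mul hU)
  have hden := (hU.const_mul 4).mul (hU.sub_const 1)
  have hq := hnum.div hden (mul_ne_zero (mul_ne_zero four_ne_zero hu₀) hu₁)
  refine (hq.congr_deriv ?_).congr_of_eventuallyEq (.of_forall fun t => ?_)
  · simp only [Pi.pow_apply, Pi.mul_apply, Pi.add_apply, Pi.sub_apply, rhs]
    field_simp
    ring
  · simp only [firstIntegral, Pi.div_apply, Pi.sub_apply, Pi.pow_apply, Pi.mul_apply,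
      Pi.add_apply]
    ring

end TracyWidom

theorem tracy_widom_first_integral_general (k n : ℝ) (y : ℝ → ℝ)
    (hy' : ∀ x > (0:ℝ), DifferentiableAt ℝ (deriv y) x)
    (hy'' : ∀ x > (0:ℝ), DifferentiableAt ℝ (deriv (deriv y)) x)
    (hne : ∀ x > (0:ℝ), deriv y x * (deriv y x - 1) ≠ 0)
    (hode : ∀ x > (0:ℝ), deriv (deriv (deriv y)) x =
      (1 / 2) * (1 / deriv y x + 1 / (deriv y x - 1)) * (deriv (deriv y) x) ^ 2
        - deriv (deriv y) x / x
        - 2 * (k + n) / x * deriv y x * (deriv y x - 1)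
        + (x + n) / (2 * x ^ 2) * (n - x + 2 * y x)
        - (n + y x) ^ 2 / (2 * x ^ 2 * deriv y x)
        - (x - y x) ^ 2 / (2 * x ^ 2 * (deriv y x - 1))) :
    ∃ K₁ : ℝ, ∀ x > (0:ℝ),
      x ^ 2 * (deriv (deriv y) x) ^ 2 =
        -4 * (k + n) * x * (deriv y x) ^ 3
          + (4 * (k + n) * y x + x ^ 2 + 2 * (2 * k + 3 * n) * x) * (deriv y x) ^ 2
          - (2 * (x + 2 * k + 3 * n) * y x + 2 * n * x + n ^ 2) * deriv y x
          + (y x + n) ^ 2 - 4 * K₁ * deriv y x * (deriv y x - 1) := by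
  have hK : ∀ x > (0:ℝ), HasDerivAt
      (fun t => TracyWidom.firstIntegral k n t (y t) (deriv y t) (deriv (deriv y) t)) 0 x := by
    intro x hx
    have hy : DifferentiableAt ℝ y x :=
      differentiableAt_of_deriv_ne_zero (left_ne_zero_of_mul (hne x hx))
    exact TracyWidom.hasDerivAt_firstIntegral k n hx.ne' (hne x hx) hy.hasDerivAt
      (hy' x hx).hasDerivAt ((hy'' x hx).hasDerivAt.congr_deriv (hode x hx))
  obtain ⟨K₁, hK₁⟩ := isOpen_Ioi.exists_is_const_of_deriv_eq_zero isPreconnected_Ioi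
    (fun x hx => (hK x hx).differentiableAt.differentiableWithinAt) (fun x hx => (hK x hx).deriv)
  exact ⟨K₁, fun x hx => hK₁ x hx ▸ TracyWidom.sq_mul_sq_eq_of_firstIntegral (hne x hx)⟩

/-- The Tracy–Widom third-order equation (5.23) admits the first integral (5.24):
a second-order second-degree equation of Chazy type SD-I.b with integration
constant `K₁`. -/
theorem tracy_widom_first_integral (k n : ℝ) (y : ℝ → ℝ)
    (hy : ∀ x > (0:ℝ), DifferentiableAt ℝ y x)
    (hy' : ∀ x > (0:ℝ), DifferentiableAt ℝ (deriv y) x)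
    (hy'' : ∀ x > (0:ℝ), DifferentiableAt ℝ (deriv (deriv y)) x)
    (hne : ∀ x > (0:ℝ), deriv y x * (deriv y x - 1) ≠ 0)
    (hode : ∀ x > (0:ℝ), deriv (deriv (deriv y)) x =
      (1 / 2) * (1 / deriv y x + 1 / (deriv y x - 1)) * (deriv (deriv y) x) ^ 2
        - deriv (deriv y) x / x
        - 2 * (k + n) / x * deriv y x * (deriv y x - 1)
        + (x + n) / (2 * x ^ 2) * (n - x + 2 * y x)
        - (n + y x) ^ 2 / (2 * x ^ 2 * deriv y x)
        - (x - y x) ^ 2 / (2 * x ^ 2 * (deriv y x - 1))) :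
    ∃ K₁ : ℝ, ∀ x > (0:ℝ),
      x ^ 2 * (deriv (deriv y) x) ^ 2 =
        -4 * (k + n) * x * (deriv y x) ^ 3
          + (4 * (k + n) * y x + x ^ 2 + 2 * (2 * k + 3 * n) * x) * (deriv y x) ^ 2
          - (2 * (x + 2 * k + 3 * n) * y x + 2 * n * x + n ^ 2) * deriv y x
          + (y x + n) ^ 2 - 4 * K₁ * deriv y x * (deriv y x - 1) :=
  tracy_widom_first_integral_general k n y hy' hy'' hne hode
end
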